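/- arXiv:1002.1410 — 9 statements merged into one kernel-verified Lean document; each statement's English description precedes it below -/
import Mathlib

section
/- There exists a function f : S² ∩ ℚ³ → {0,1} such that: (a) f(x) = f(-x) for all x; (b) if x ⊥ x' then f(x) + f(x') ≥ 1; and (c) if x, x', x'' are mutually orthogonal then f(x) + f(x') + f(x'') = 2. -/
set_option maxHeartbeats 1000000

/-- key mod 4 fact -/
lemma zmod4_key : ∀ a0 a1 a2 n : ZMod 4, a0^2+a1^2+a2^2 = n^2 →
  (¬((a0=0∨a0=2) ∧ (a1=0∨a1=2) ∧ (a2=0∨a2=2) ∧ (n=0∨n=2))) →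
  ((n=1∨n=3) ∧ (((a0=1∨a0=3) ∧ (a1=0∨a1=2) ∧ (a2=0∨a2=2)) ∨
    ((a0=0∨a0=2) ∧ (a1=1∨a1=3) ∧ (a2=0∨a2=2)) ∨
    ((a0=0∨a0=2) ∧ (a1=0∨a1=2) ∧ (a2=1∨a2=3)))) := by
  set_option synthInstance.maxSize 2000 in set_option synthInstance.maxHeartbeats 1000000 in decide

lemma even_cast4 {a : ℤ} (h : Even a) : ((a : ZMod 4) = 0 ∨ (a : ZMod 4) = 2) := by
  obtain ⟨k, rfl⟩ := h
  push_cast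
  have : ∀ k : ZMod 4, k + k = 0 ∨ k + k = 2 := by decide
  exact this _

lemma odd_cast4 {a : ℤ} (h : Odd a) : ((a : ZMod 4) = 1 ∨ (a : ZMod 4) = 3) := by
  obtain ⟨k, rfl⟩ := h
  push_cast
  have : ∀ k : ZMod 4, 2*k + 1 = 1 ∨ 2*k+1 = 3 := by decide
  exact this _

lemma even_of_cast4 {a : ℤ} (h : (a : ZMod 4) = 0 ∨ (a : ZMod 4) = 2) : Even a := by
  rcases Int.even_or_odd a with he | ho
  · exact he
  · rcases odd_cast4 ho with h1 | h1 <;> rcases h with h2 | h2 <;> rw [h1] at h2 <;> exact absurd h2 (by decide)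

lemma odd_of_cast4 {a : ℤ} (h : (a : ZMod 4) = 1 ∨ (a : ZMod 4) = 3) : Odd a := by
  rcases Int.even_or_odd a with he | ho
  · rcases even_cast4 he with h1 | h1 <;> rcases h with h2 | h2 <;> rw [h1] at h2
      <;> exact absurd h2 (by decide)
  · exact ho

lemma parity_step {a0 a1 a2 n : ℤ} (h : a0^2+a1^2+a2^2 = n^2)
    (hne : ¬(Even a0 ∧ Even a1 ∧ Even a2 ∧ Even n)) :
    Odd n ∧ ((Odd a0 ∧ Even a1 ∧ Even a2) ∨ (Even a0 ∧ Odd a1 ∧ Even a2) ∨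
      (Even a0 ∧ Even a1 ∧ Odd a2)) := by
  have h4 : (a0 : ZMod 4)^2 + (a1 : ZMod 4)^2 + (a2 : ZMod 4)^2 = (n : ZMod 4)^2 := by
    have := congrArg (fun z : ℤ => (z : ZMod 4)) h
    push_cast at this
    exact this
  have hne4 : ¬((((a0 : ZMod 4))=0∨((a0 : ZMod 4))=2) ∧ (((a1 : ZMod 4))=0∨((a1 : ZMod 4))=2)
      ∧ (((a2 : ZMod 4))=0∨((a2 : ZMod 4))=2) ∧ (((n : ZMod 4))=0∨((n : ZMod 4))=2)) := by
    intro ⟨e0, e1, e2, e3⟩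
    exact hne ⟨even_of_cast4 e0, even_of_cast4 e1, even_of_cast4 e2, even_of_cast4 e3⟩
  obtain ⟨hn, hc⟩ := zmod4_key _ _ _ _ h4 hne4
  refine ⟨odd_of_cast4 hn, ?_⟩
  rcases hc with ⟨h0, h1, h2⟩ | ⟨h0, h1, h2⟩ | ⟨h0, h1, h2⟩
  · exact Or.inl ⟨odd_of_cast4 h0, even_of_cast4 h1, even_of_cast4 h2⟩
  · exact Or.inr (Or.inl ⟨even_of_cast4 h0, odd_of_cast4 h1, even_of_cast4 h2⟩)
  · exact Or.inr (Or.inr ⟨even_of_cast4 h0, even_of_cast4 h1, odd_of_cast4 h2⟩)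

lemma descent : ∀ (n : ℕ) (a : Fin 3 → ℤ), 0 < n → a 0^2 + a 1^2 + a 2^2 = (n:ℤ)^2 →
    ∃ (b : Fin 3 → ℤ) (m : ℕ), 0 < m ∧ Odd (m:ℤ) ∧ (∀ i, (a i : ℚ) * m = b i * n) ∧
      ∃ p : Fin 3, ∀ i, Odd (b i) ↔ i = p := by
  intro n
  induction n using Nat.strong_induction_on with
  | _ n ih =>
    intro a hn h
    by_cases hall : Even (a 0) ∧ Even (a 1) ∧ Even (a 2) ∧ Even ((n : ℤ))
    · obtain ⟨⟨k0, hk0⟩, ⟨k1, hk1⟩, ⟨k2, hk2⟩, hne⟩ := hall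
      have hneN : Even n := by exact_mod_cast hne
      obtain ⟨n', hn'⟩ := hneN
      have hn'pos : 0 < n' := by omega
      have hcast : (n : ℤ) = 2 * (n' : ℤ) := by push_cast [hn']; ring
      have h4 : (4:ℤ) * (k0^2 + k1^2 + k2^2) = 4 * ((n' : ℤ)^2) := by
        rw [hk0, hk1, hk2, hcast] at h; linear_combination h
      have heq : k0^2 + k1^2 + k2^2 = ((n' : ℤ))^2 :=
        mul_left_cancel₀ (by norm_num : (4:ℤ) ≠ 0) h4
      obtain ⟨b, m, hm, hodd, hrel, hp⟩ := ih n' (by omega) ![k0, k1, k2] hn'pos (by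
        simpa using heq)
      refine ⟨b, m, hm, hodd, ?_, hp⟩
      have hr0 : (k0:ℚ) * m = b 0 * n' := by simpa using hrel 0
      have hr1 : (k1:ℚ) * m = b 1 * n' := by simpa using hrel 1
      have hr2 : (k2:ℚ) * m = b 2 * n' := by simpa using hrel 2
      intro i
      fin_cases i
      · show (a 0 : ℚ) * m = b 0 * n
        rw [hk0]; push_cast [hn']; linear_combination 2 * hr0
      · show (a 1 : ℚ) * m = b 1 * n
        rw [hk1]; push_cast [hn']; linear_combination 2 * hr1
      · show (a 2 : ℚ) * m = b 2 * n
        rw [hk2]; push_cast [hn']; linear_combination 2 * hr2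
    · have hres := parity_step h (by tauto)
      obtain ⟨hoddn, hdisj⟩ := hres
      refine ⟨a, n, hn, hoddn, fun i => rfl, ?_⟩
      rcases hdisj with ⟨h0, h1, h2⟩ | ⟨h0, h1, h2⟩ | ⟨h0, h1, h2⟩
      · exact ⟨0, by intro i; fin_cases i <;>
          simp [h0, Int.not_odd_iff_even.mpr h1, Int.not_odd_iff_even.mpr h2]⟩
      · exact ⟨1, by intro i; fin_cases i <;>
          simp [h1, Int.not_odd_iff_even.mpr h0, Int.not_odd_iff_even.mpr h2]⟩
      · exact ⟨2, by intro i; fin_cases i <;>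
          simp [h2, Int.not_odd_iff_even.mpr h0, Int.not_odd_iff_even.mpr h1]⟩

/-- `x` is a rational point on the unit sphere `S²` in `ℝ³`. -/
def RatUnitVec (x : Fin 3 → ℝ) : Prop :=
  (∑ i, x i ^ 2 = 1) ∧ ∀ i, ∃ q : ℚ, x i = (q : ℝ)

/-- Orthogonality with respect to the standard inner product on `ℝ³`. -/
def PerpVec (x y : Fin 3 → ℝ) : Prop := ∑ i, x i * y i = 0

lemma exists_rep {x : Fin 3 → ℝ} (h : RatUnitVec x) :
    ∃ (b : Fin 3 → ℤ) (m : ℕ), 0 < m ∧ Odd (m : ℤ) ∧ (∀ i, x i = b i / m) ∧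
      ∃ p : Fin 3, ∀ i, Odd (b i) ↔ i = p := by
  obtain ⟨hsum, hq⟩ := h
  choose q hq using hq
  -- common denominator
  set n : ℕ := (q 0).den * (q 1).den * (q 2).den with hn
  have hnpos : 0 < n := by positivity
  have hdvd : ∀ i : Fin 3, ((q i).den : ℤ) ∣ (n : ℤ) := by
    intro i
    have : (q i).den ∣ n := by
      fin_cases i
      · show (q 0).den ∣ n
        exact ⟨(q 1).den * (q 2).den, by rw [hn]; ring⟩
      · show (q 1).den ∣ n
        exact ⟨(q 0).den * (q 2).den, by rw [hn]; ring⟩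
      · show (q 2).den ∣ n
        exact ⟨(q 0).den * (q 1).den, by rw [hn]; ring⟩
    exact_mod_cast this
  set a : Fin 3 → ℤ := fun i => (q i).num * ((n : ℤ) / ((q i).den : ℤ)) with ha
  have haq : ∀ i, (a i : ℚ) = q i * n := by
    intro i
    have h1 : ((q i).den : ℤ) * ((n : ℤ) / ((q i).den : ℤ)) = (n : ℤ) :=
      Int.mul_ediv_cancel' (hdvd i)
    have h1q : ((q i).den : ℚ) * (((n : ℤ) / ((q i).den : ℤ) : ℤ) : ℚ) = (n : ℚ) := by
      exact_mod_cast congrArg (fun z : ℤ => (z : ℚ)) h1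
    have hden : ((q i).den : ℚ) ≠ 0 := by
      exact_mod_cast (q i).den_nz
    have h2 : (((n : ℤ) / ((q i).den : ℤ) : ℤ) : ℚ) = (n : ℚ) / ((q i).den : ℚ) :=
      (eq_div_iff hden).mpr (by linear_combination h1q)
    have h3 : (q i) * ((q i).den : ℚ) = ((q i).num : ℚ) := by
      exact_mod_cast Rat.mul_den_eq_num (q i)
    rw [ha]
    push_cast
    rw [h2]
    field_simp
    first
      | linear_combination 2 * (n : ℚ) * h3
      | linear_combination (-2) * (n : ℚ) * h3
      | linear_combination (n : ℚ) * h3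
      | linear_combination (-(n : ℚ)) * h3
      | ring_nf; nlinarith [h3]
  -- real description
  have hx : ∀ i, x i = a i / n := by
    intro i
    rw [hq i]
    have : ((a i : ℚ) : ℝ) = (q i : ℝ) * n := by exact_mod_cast congrArg (fun z : ℚ => (z : ℝ)) (haq i)
    push_cast at this ⊢
    field_simp
    linarith [this]
  -- sum of squares over ℚ
  have hsq : (q 0)^2 + (q 1)^2 + (q 2)^2 = 1 := by
    have : (x 0)^2 + (x 1)^2 + (x 2)^2 = 1 := by
      rw [← hsum]; simp [Fin.sum_univ_three]
    rw [hq 0, hq 1, hq 2] at this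
    exact_mod_cast this
  have hsa : a 0^2 + a 1^2 + a 2^2 = (n : ℤ)^2 := by
    have : ((a 0 : ℚ))^2 + (a 1 : ℚ)^2 + (a 2 : ℚ)^2 = ((n:ℚ))^2 := by
      rw [haq 0, haq 1, haq 2]
      linear_combination (n:ℚ)^2 * hsq
    exact_mod_cast this
  obtain ⟨b, m, hm, hodd, hrel, hp⟩ := descent n a hnpos hsa
  refine ⟨b, m, hm, hodd, ?_, hp⟩
  intro i
  have hr : ((a i : ℚ)) * m = b i * n := hrel i
  have hrR : ((a i : ℝ)) * m = b i * n := by exact_mod_cast congrArg (fun z : ℚ => (z : ℝ)) hr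
  rw [hx i]
  have hnR : (n : ℝ) ≠ 0 := by positivity
  have hmR : (m : ℝ) ≠ 0 := by positivity
  field_simp
  linarith [hrR]

lemma num_parity {b : ℤ} {m : ℕ} (hm : 0 < m) (hodd : Odd (m : ℤ)) {q : ℚ}
    (hq : (q : ℚ) = (b : ℚ) / m) : (Odd q.num ↔ Odd b) := by
  have hm0 : ((m : ℚ)) ≠ 0 := by positivity
  have h1 : q * m = b := by rw [hq]; field_simp
  have h3 : q * (q.den : ℚ) = (q.num : ℚ) := by exact_mod_cast Rat.mul_den_eq_num q
  have h2 : (q.num : ℚ) * m = b * q.den := by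
    linear_combination (q.den : ℚ) * h1 - (m : ℚ) * h3
  have key : q.num * (m : ℤ) = b * (q.den : ℤ) := by exact_mod_cast h2
  have hden_odd : Odd ((q.den : ℤ)) := by
    rcases Int.even_or_odd (q.den : ℤ) with he | ho
    · exfalso
      have hnum : Odd q.num := by
        rcases Int.even_or_odd q.num with he' | ho'
        · exfalso
          have h2n : 2 ∣ q.num.natAbs := by
            have : Even q.num.natAbs := Int.natAbs_even.mpr he'
            exact this.two_dvd
          have h2d : 2 ∣ q.den := by
            have : Even q.den := by exact_mod_cast he
            exact this.two_dvd
          have hg := Nat.dvd_gcd h2n h2d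
          rw [Nat.Coprime.gcd_eq_one q.reduced] at hg
          omega
        · exact ho'
      have hL : Odd (q.num * (m : ℤ)) := hnum.mul hodd
      rw [key] at hL
      rw [Int.odd_mul] at hL
      exact (Int.not_odd_iff_even.mpr he) hL.2
    · exact ho
  constructor
  · intro h
    have hL : Odd (q.num * (m : ℤ)) := h.mul hodd
    rw [key, Int.odd_mul] at hL
    exact hL.1
  · intro h
    have hL : Odd (b * (q.den : ℤ)) := h.mul hden_odd
    rw [← key, Int.odd_mul] at hL
    exact hL.1

open Classical in
noncomputable def meyerF (x : Fin 3 → ℝ) : ℕ :=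
  if ∃ q : ℚ, (q : ℝ) = x 2 ∧ Odd q.num then 0 else 1

lemma meyerF_eq {x : Fin 3 → ℝ} {b : Fin 3 → ℤ} {m : ℕ} {p : Fin 3} (hm : 0 < m)
    (hodd : Odd (m : ℤ)) (hx : ∀ i, x i = b i / m) (hp : ∀ i, Odd (b i) ↔ i = p) :
    meyerF x = if p = 2 then 0 else 1 := by
  have hm0 : ((m : ℝ)) ≠ 0 := by positivity
  have hiff : (∃ q : ℚ, (q : ℝ) = x 2 ∧ Odd q.num) ↔ Odd (b 2) := by
    constructor
    · rintro ⟨q, hqx, hqodd⟩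
      have hq : (q : ℚ) = (b 2 : ℚ) / m := by
        have : ((q : ℝ)) = ((((b 2 : ℚ) / m : ℚ)) : ℝ) := by
          rw [hqx, hx 2]; push_cast; ring
        exact_mod_cast this
      exact (num_parity hm hodd hq).mp hqodd
    · intro hb
      refine ⟨(b 2 : ℚ) / m, ?_, ?_⟩
      · rw [hx 2]; push_cast; ring
      · exact (num_parity hm hodd rfl).mpr hb
  unfold meyerF
  by_cases hcase : p = 2
  · rw [if_pos hcase, if_pos (hiff.mpr ((hp 2).mpr hcase.symm))]
  · rw [if_neg hcase, if_neg (fun hex => hcase ((hp 2).mp (hiff.mp hex)).symm)]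

lemma odd_dot {b b' : Fin 3 → ℤ} {p : Fin 3} (hp : ∀ i, Odd (b i) ↔ i = p)
    (hp' : ∀ i, Odd (b' i) ↔ i = p) : Odd (b 0 * b' 0 + b 1 * b' 1 + b 2 * b' 2) := by
  have par : ∀ i : Fin 3, (i = p → Odd (b i * b' i)) ∧ (i ≠ p → Even (b i * b' i)) := by
    intro i
    constructor
    · intro h; exact ((hp i).mpr h).mul ((hp' i).mpr h)
    · intro h
      have hno : ¬ Odd (b i) := fun ho => h ((hp i).mp ho)
      exact (Int.not_odd_iff_even.mp hno).mul_right _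
  fin_cases p
  · exact (((par 0).1 (by decide)).add_even ((par 1).2 (by decide))).add_even
      ((par 2).2 (by decide))
  · exact (Even.add_odd ((par 0).2 (by decide)) ((par 1).1 (by decide))).add_even
      ((par 2).2 (by decide))
  · exact Even.add_odd (((par 0).2 (by decide)).add ((par 1).2 (by decide)))
      ((par 2).1 (by decide))

lemma perp_p_ne {x x' : Fin 3 → ℝ} {b b' : Fin 3 → ℤ} {m m' : ℕ} {p p' : Fin 3}
    (hm : 0 < m) (hm' : 0 < m')
    (hx : ∀ i, x i = b i / m) (hx' : ∀ i, x' i = b' i / m')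
    (hp : ∀ i, Odd (b i) ↔ i = p) (hp' : ∀ i, Odd (b' i) ↔ i = p')
    (hperp : PerpVec x x') : p ≠ p' := by
  have hm0 : ((m : ℝ)) ≠ 0 := by positivity
  have hm'0 : ((m' : ℝ)) ≠ 0 := by positivity
  have hd : x 0 * x' 0 + x 1 * x' 1 + x 2 * x' 2 = 0 := by
    have := hperp; rw [PerpVec, Fin.sum_univ_three] at this; exact this
  rw [hx 0, hx 1, hx 2, hx' 0, hx' 1, hx' 2] at hd
  have hR : ((b 0 * b' 0 + b 1 * b' 1 + b 2 * b' 2 : ℤ) : ℝ) = 0 := by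
    push_cast
    field_simp at hd
    linarith [hd]
  have hZ : (b 0 * b' 0 + b 1 * b' 1 + b 2 * b' 2 : ℤ) = 0 := by exact_mod_cast hR
  intro heq
  subst heq
  have hodd := odd_dot hp hp'
  rw [hZ] at hodd
  simp at hodd

lemma cross_spec {x x' : Fin 3 → ℝ} (hx : RatUnitVec x) (hx' : RatUnitVec x')
    (hperp : PerpVec x x') :
    RatUnitVec ![x 1 * x' 2 - x 2 * x' 1, x 2 * x' 0 - x 0 * x' 2,
      x 0 * x' 1 - x 1 * x' 0] ∧
    PerpVec x ![x 1 * x' 2 - x 2 * x' 1, x 2 * x' 0 - x 0 * x' 2, x 0 * x' 1 - x 1 * x' 0] ∧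
    PerpVec x' ![x 1 * x' 2 - x 2 * x' 1, x 2 * x' 0 - x 0 * x' 2, x 0 * x' 1 - x 1 * x' 0] := by
  obtain ⟨hs, hq⟩ := hx
  obtain ⟨hs', hq'⟩ := hx'
  rw [Fin.sum_univ_three] at hs hs'
  rw [PerpVec, Fin.sum_univ_three] at hperp
  refine ⟨⟨?_, ?_⟩, ?_, ?_⟩
  · rw [Fin.sum_univ_three]
    simp only [Matrix.cons_val_zero, Matrix.cons_val_one, Matrix.head_cons,
      Matrix.cons_val_two, Matrix.tail_cons]
    nlinarith [hs, hs', hperp]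
  · intro i
    choose q hqe using hq
    choose q' hqe' using hq'
    fin_cases i
    · exact ⟨q 1 * q' 2 - q 2 * q' 1, by push_cast [← hqe, ← hqe']; rfl⟩
    · exact ⟨q 2 * q' 0 - q 0 * q' 2, by push_cast [← hqe, ← hqe']; rfl⟩
    · exact ⟨q 0 * q' 1 - q 1 * q' 0, by push_cast [← hqe, ← hqe']; rfl⟩
  · rw [PerpVec, Fin.sum_univ_three]
    simp only [Matrix.cons_val_zero, Matrix.cons_val_one, Matrix.head_cons,
      Matrix.cons_val_two, Matrix.tail_cons]
    ring
  · rw [PerpVec, Fin.sum_univ_three]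
    simp only [Matrix.cons_val_zero, Matrix.cons_val_one, Matrix.head_cons,
      Matrix.cons_val_two, Matrix.tail_cons]
    ring

lemma fin3_sum (p p' p'' : Fin 3) (h1 : p ≠ p') (h2 : p' ≠ p'') (h3 : p ≠ p'') :
    (if p = 2 then 0 else 1) + (if p' = 2 then 0 else 1) + (if p'' = 2 then 0 else 1)
      = (2 : ℕ) := by
  fin_cases p <;> fin_cases p' <;> fin_cases p'' <;> simp_all <;> rfl

lemma meyer_triple {x x' x'' : Fin 3 → ℝ} (h : RatUnitVec x) (h' : RatUnitVec x')
    (h'' : RatUnitVec x'') (hp1 : PerpVec x x') (hp2 : PerpVec x' x'')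
    (hp3 : PerpVec x x'') : meyerF x + meyerF x' + meyerF x'' = 2 := by
  obtain ⟨b, m, hm, hodd, hxr, p, hp⟩ := exists_rep h
  obtain ⟨b', m', hm', hodd', hxr', p', hp'⟩ := exists_rep h'
  obtain ⟨b'', m'', hm'', hodd'', hxr'', p'', hp''⟩ := exists_rep h''
  rw [meyerF_eq hm hodd hxr hp, meyerF_eq hm' hodd' hxr' hp',
    meyerF_eq hm'' hodd'' hxr'' hp'']
  exact fin3_sum p p' p'' (perp_p_ne hm hm' hxr hxr' hp hp' hp1)
    (perp_p_ne hm' hm'' hxr' hxr'' hp' hp'' hp2)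
    (perp_p_ne hm hm'' hxr hxr'' hp hp'' hp3)

lemma meyerF_neg (x : Fin 3 → ℝ) : meyerF (-x) = meyerF x := by
  have hiff : (∃ q : ℚ, (q : ℝ) = (-x) 2 ∧ Odd q.num) ↔
      (∃ q : ℚ, (q : ℝ) = x 2 ∧ Odd q.num) := by
    constructor
    · rintro ⟨q, hq, ho⟩
      refine ⟨-q, ?_, ?_⟩
      · push_cast; simp only [Pi.neg_apply] at hq; linarith [hq]
      · rw [show (-q).num = -q.num from rfl]; exact ho.neg
    · rintro ⟨q, hq, ho⟩
      refine ⟨-q, ?_, ?_⟩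
      · push_cast; simp only [Pi.neg_apply]; linarith [hq]
      · rw [show (-q).num = -q.num from rfl]; exact ho.neg
  simp only [meyerF]
  by_cases hc : ∃ q : ℚ, (q : ℝ) = x 2 ∧ Odd q.num
  · rw [if_pos hc, if_pos (hiff.mpr hc)]
  · rw [if_neg hc, if_neg (fun hh => hc (hiff.mp hh))]

/-- Meyer's coloring: there exists a `{0,1}`-valued function on `S² ∩ ℚ³` such that
(a) `f(x) = f(-x)`, (b) if `x ⊥ x'` then `f(x) + f(x') ≥ 1`, and (c) for mutually
orthogonal `x, x', x''` one has `f(x) + f(x') + f(x'') = 2`. -/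
theorem stmt_2 :
    ∃ f : (Fin 3 → ℝ) → ℕ,
      (∀ x, RatUnitVec x → f x = 0 ∨ f x = 1) ∧
      (∀ x, RatUnitVec x → f (-x) = f x) ∧
      (∀ x x', RatUnitVec x → RatUnitVec x' → PerpVec x x' → 1 ≤ f x + f x') ∧
      (∀ x x' x'', RatUnitVec x → RatUnitVec x' → RatUnitVec x'' →
        PerpVec x x' → PerpVec x' x'' → PerpVec x x'' →
        f x + f x' + f x'' = 2) := by
  refine ⟨meyerF, ?_, ?_, ?_, ?_⟩
  · intro x _
    by_cases hc : ∃ q : ℚ, (q : ℝ) = x 2 ∧ Odd q.num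
    · exact Or.inl (by simp [meyerF, if_pos hc])
    · exact Or.inr (by simp [meyerF, if_neg hc])
  · intro x _
    exact meyerF_neg x
  · intro x x' h h' hperp
    obtain ⟨hcr, hc1, hc2⟩ := cross_spec h h' hperp
    have htr := meyer_triple h h' hcr hperp hc2 hc1
    have hb : meyerF ![x 1 * x' 2 - x 2 * x' 1, x 2 * x' 0 - x 0 * x' 2,
        x 0 * x' 1 - x 1 * x' 0] ≤ 1 := by
      simp only [meyerF]
      split <;> omega
    omega
  · intro x x' x'' h h' h'' hp1 hp2 hp3
    exact meyer_triple h h' h'' hp1 hp2 hp3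
end

section
/- Let Λ_KS be the set of functions λ assigning to each bounded self-adjoint operator A on H a value λ(A) ∈ σ(A) such that λ(f(A)) = f(λ(A)) for every Borel function f. Then every λ ∈ Λ_KS satisfies the finite sum rule: for mutually orthogonal projections P₁, …, Pₙ, λ(P₁ + ⋯ + Pₙ) = λ(P₁) + ⋯ + λ(Pₙ). -/
set_option synthInstance.maxHeartbeats 1000000
set_option maxHeartbeats 2000000

open Polynomial Finset

/-- Finite sum rule for Kochen–Specker valuation functions: if `lam` assigns to every
bounded self-adjoint operator `A` a value in its spectrum and satisfies the FUNC rule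
`lam (f(A)) = f (lam A)` (with `f(A)` given by the functional calculus), then for mutually
orthogonal projections `P₁, …, Pₙ` one has `lam (P₁ + ⋯ + Pₙ) = lam P₁ + ⋯ + lam Pₙ`. -/
theorem stmt_7 {H : Type*} [NormedAddCommGroup H] [InnerProductSpace ℂ H] [CompleteSpace H]
    (lam : (H →L[ℂ] H) → ℝ)
    (hspec : ∀ A : H →L[ℂ] H, IsSelfAdjoint A → lam A ∈ spectrum ℝ A)
    (hfunc : ∀ (A : H →L[ℂ] H), IsSelfAdjoint A → ∀ f : ℝ → ℝ,
      ContinuousOn f (spectrum ℝ A) → lam (cfc f A) = f (lam A))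
    (n : ℕ) (P : Fin n → H →L[ℂ] H)
    (hsa : ∀ i, IsSelfAdjoint (P i)) (hidem : ∀ i, P i * P i = P i)
    (horth : ∀ i j, i ≠ j → P i * P j = 0) :
    lam (∑ i, P i) = ∑ i, lam (P i) := by
  classical
  set c : Fin n → ℝ := fun i => (i : ℝ) + 1 with hc
  have hcpos : ∀ i, 0 < c i := fun i => by positivity
  have hcinj : Function.Injective c := by
    intro i j h
    have : ((i : ℕ) : ℝ) = ((j : ℕ) : ℝ) := by simpa [hc] using h
    exact Fin.ext (by exact_mod_cast this)
  set A : H →L[ℂ] H := ∑ i, ((c i : ℂ)) • P i with hAdef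
  have hsmulR : ∀ (r : ℝ) (B : H →L[ℂ] H), r • B = (r : ℂ) • B := fun r B => by
    rw [← algebraMap_smul ℂ r B, Complex.coe_algebraMap]
  have hA : IsSelfAdjoint A := by
    rw [hAdef, IsSelfAdjoint, star_sum]
    refine Finset.sum_congr rfl fun i _ => ?_
    rw [star_smul, (hsa i).star_eq, Complex.star_def, Complex.conj_ofReal]
  -- powers of A
  have hpow : ∀ k : ℕ, A ^ (k + 1) = ∑ i, ((c i : ℂ)) ^ (k + 1) • P i := by
    intro k
    induction k with
    | zero => simp [hAdef]
    | succ k ih =>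
      rw [pow_succ, ih, hAdef, Finset.sum_mul_sum]
      refine Finset.sum_congr rfl fun i _ => ?_
      rw [Finset.sum_eq_single i]
      · rw [smul_mul_smul_comm, hidem i, ← pow_succ]
      · intro j _ hj
        rw [smul_mul_smul_comm, horth i j (fun h => hj h.symm), smul_zero]
      · intro h; exact absurd (Finset.mem_univ i) h
  -- aeval formula
  have haeval : ∀ q : ℝ[X], aeval A q
      = (q.eval 0) • (1 : H →L[ℂ] H) + ∑ i, (q.eval (c i) - q.eval 0) • P i := by
    intro q
    induction q using Polynomial.induction_on' with
    | add p q hp hq =>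
      have hterm : ∀ i ∈ Finset.univ, ((p + q).eval (c i) - (p + q).eval 0) • P i
          = (p.eval (c i) - p.eval 0) • P i + (q.eval (c i) - q.eval 0) • P i := by
        intro i _
        rw [← add_smul]; congr 1; simp only [eval_add]; ring
      rw [map_add, hp, hq, Finset.sum_congr rfl hterm, Finset.sum_add_distrib, eval_add,
        add_smul]
      abel
    | monomial k a =>
      cases k with
      | zero =>
        simp [Algebra.algebraMap_eq_smul_one]
      | succ k =>
        rw [aeval_monomial, ← Algebra.smul_def, hpow k, Finset.smul_sum]
        have h0 : (monomial (k + 1) a).eval 0 = 0 := by simp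
        rw [h0, zero_smul, zero_add]
        refine Finset.sum_congr rfl fun i _ => ?_
        rw [← smul_assoc, Complex.real_smul, sub_zero, eval_monomial, hsmulR]
        congr 1
        push_cast
        ring
  -- Lagrange-type polynomials
  set d : Fin n → ℝ := fun i => c i * ∏ j ∈ Finset.univ.erase i, (c i - c j) with hd
  have hdne : ∀ i, d i ≠ 0 := by
    intro i
    refine mul_ne_zero (hcpos i).ne' (Finset.prod_ne_zero_iff.mpr fun j hj => ?_)
    exact sub_ne_zero.mpr fun h => (Finset.mem_erase.mp hj).1 (hcinj h.symm)
  set p : Fin n → ℝ[X] :=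
    fun i => C (d i)⁻¹ * (X * ∏ j ∈ Finset.univ.erase i, (X - C (c j))) with hp
  have hp0 : ∀ i, (p i).eval 0 = 0 := by intro i; simp [hp]
  have hpii : ∀ i, (p i).eval (c i) = 1 := by
    intro i
    have : (p i).eval (c i) = (d i)⁻¹ * d i := by simp [hp, hd, eval_prod]
    rw [this, inv_mul_cancel₀ (hdne i)]
  have hpne : ∀ i j, j ≠ i → (p i).eval (c j) = 0 := by
    intro i j hji
    have hz : ∏ l ∈ Finset.univ.erase i, (c j - c l) = 0 :=
      Finset.prod_eq_zero (Finset.mem_erase.mpr ⟨hji, Finset.mem_univ j⟩) (by ring)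
    simp [hp, eval_prod, hz]
  have hcfcP : ∀ i, cfc (fun x => (p i).eval x) A = P i := by
    intro i
    rw [show (fun x => (p i).eval x) = (p i).eval from rfl, cfc_polynomial (p i) A hA,
      haeval (p i), hp0 i, zero_smul, zero_add]
    rw [Finset.sum_eq_single i]
    · rw [hpii i, sub_zero, one_smul]
    · intro j _ hj; rw [hpne i j hj, sub_zero, zero_smul]
    · intro h; exact absurd (Finset.mem_univ i) h
  set g : ℝ[X] := ∑ i, p i with hg
  have hg0 : g.eval 0 = 0 := by
    rw [hg, eval_finset_sum]; exact Finset.sum_eq_zero fun i _ => hp0 i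
  have hgc : ∀ j, g.eval (c j) = 1 := by
    intro j
    rw [hg, eval_finset_sum, Finset.sum_eq_single j (fun i _ hij => hpne i j hij.symm)
      (fun h => absurd (Finset.mem_univ j) h)]
    exact hpii j
  have hcfcS : cfc (fun x => g.eval x) A = ∑ i, P i := by
    rw [show (fun x => g.eval x) = g.eval from rfl, cfc_polynomial g A hA, haeval g, hg0,
      zero_smul, zero_add]
    exact Finset.sum_congr rfl fun i _ => by rw [hgc i, sub_zero, one_smul]
  calc lam (∑ i, P i) = lam (cfc (fun x => g.eval x) A) := by rw [hcfcS]
    _ = g.eval (lam A) := hfunc A hA _ (g.continuous.continuousOn)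
    _ = ∑ i, (p i).eval (lam A) := by rw [hg, eval_finset_sum]
    _ = ∑ i, lam (P i) := by
        refine Finset.sum_congr rfl fun i _ => ?_
        rw [← hfunc A hA _ ((p i).continuous.continuousOn), hcfcP i]
end

section
/- If E(A) = Tr(UA) for a positive trace-class operator U ≠ 0, and E is pure (i.e. whenever E = E' + E'' for expectation-value functionals E', E'' of the same form, there exist constants c', c'' ≥ 0 with c' + c'' = 1 such that E' = c'E and E'' = c''E), then U = λP_e for some unit vector e and λ > 0. Conversely, for every unit vector e, the functional A ↦ Tr(P_e A) = ⟨e, Ae⟩ is pure. -/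
open scoped InnerProductSpace

/-- The trace of `U * A` computed along the Hilbert basis `b`, i.e. `Tr(UA)`. -/
noncomputable def trExp {H : Type*} [NormedAddCommGroup H] [InnerProductSpace ℂ H]
    [CompleteSpace H] {ι : Type*} (b : HilbertBasis ι ℂ H) (U A : H →L[ℂ] H) : ℝ :=
  ∑' i, (⟪b i, (U * A) (b i)⟫_ℂ).re

/-- `U` is positive and trace-class (along the Hilbert basis `b`). -/
def IsPosTraceClass {H : Type*} [NormedAddCommGroup H] [InnerProductSpace ℂ H]
    [CompleteSpace H] {ι : Type*} (b : HilbertBasis ι ℂ H) (U : H →L[ℂ] H) : Prop :=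
  U.IsPositive ∧ Summable (fun i => (⟪b i, U (b i)⟫_ℂ).re)

namespace VNaux

open ContinuousLinearMap

variable {H : Type*} [NormedAddCommGroup H] [InnerProductSpace ℂ H] [CompleteSpace H]

/-- Square root of a positive operator. -/
lemma exists_sqrt {U : H →L[ℂ] H} (hU : U.IsPositive) :
    ∃ S : H →L[ℂ] H, S.IsPositive ∧ S * S = U := by
  refine ⟨CFC.sqrt U, ?_, ?_⟩
  · rw [← ContinuousLinearMap.nonneg_iff_isPositive]
    exact CFC.sqrt_nonneg U
  · exact CFC.sqrt_mul_sqrt_self U ((ContinuousLinearMap.nonneg_iff_isPositive U).2 hU)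

lemma selfAdj_inner_move {S : H →L[ℂ] H} (hS : IsSelfAdjoint S) (x y : H) :
    ⟪S x, y⟫_ℂ = ⟪x, S y⟫_ℂ := by
  conv_lhs => rw [← hS.adjoint_eq]
  rw [ContinuousLinearMap.adjoint_inner_left]


lemma inner_self_re (x : H) : (⟪x, x⟫_ℂ).re = ‖x‖ ^ 2 := by
  have := inner_self_eq_norm_sq (𝕜 := ℂ) x
  simpa using this

/-- Positive operator Cauchy-Schwarz. -/
lemma pos_inner_sq_le {U : H →L[ℂ] H} (hU : U.IsPositive) (x y : H) :
    ‖⟪U x, y⟫_ℂ‖ ^ 2 ≤ (⟪x, U x⟫_ℂ).re * (⟪y, U y⟫_ℂ).re := by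
  obtain ⟨S, hSpos, hSS⟩ := exists_sqrt hU
  have hx : ∀ z : H, (⟪z, U z⟫_ℂ).re = ‖S z‖ ^ 2 := by
    intro z
    rw [← hSS, ContinuousLinearMap.mul_apply, ← selfAdj_inner_move hSpos.isSelfAdjoint, inner_self_re]
  have h1 : ⟪U x, y⟫_ℂ = ⟪S x, S y⟫_ℂ := by
    rw [← hSS, ContinuousLinearMap.mul_apply, selfAdj_inner_move hSpos.isSelfAdjoint,
      ← selfAdj_inner_move hSpos.isSelfAdjoint]
  rw [h1, hx, hx]
  calc ‖⟪S x, S y⟫_ℂ‖ ^ 2 ≤ (‖S x‖ * ‖S y‖) ^ 2 := by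
        have := norm_inner_le_norm (𝕜 := ℂ) (S x) (S y)
        exact pow_le_pow_left₀ (norm_nonneg _) this 2
    _ = ‖S x‖ ^ 2 * ‖S y‖ ^ 2 := by ring

lemma pos_apply_eq_zero {U : H →L[ℂ] H} (hU : U.IsPositive) {x : H}
    (hx : (⟪x, U x⟫_ℂ).re = 0) : U x = 0 := by
  obtain ⟨S, hSpos, hSS⟩ := exists_sqrt hU
  have h : ‖S x‖ ^ 2 = 0 := by
    rw [← inner_self_re, selfAdj_inner_move hSpos.isSelfAdjoint, ← ContinuousLinearMap.mul_apply,
      hSS, hx]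
  have hSx : S x = 0 := by
    rwa [pow_eq_zero_iff (two_ne_zero), norm_eq_zero] at h
  rw [← hSS, ContinuousLinearMap.mul_apply, hSx, map_zero]

lemma selfAdj_inner_self_real {T : H →L[ℂ] H} (hT : IsSelfAdjoint T) (x : H) :
    ⟪x, T x⟫_ℂ = ((⟪x, T x⟫_ℂ).re : ℂ) := by
  have h : (starRingEnd ℂ) ⟪x, T x⟫_ℂ = ⟪x, T x⟫_ℂ := by
    rw [inner_conj_symm, selfAdj_inner_move hT]
  exact ((Complex.conj_eq_iff_re).1 h).symm

lemma eq_zero_of_re_inner_zero {D : H →L[ℂ] H} (hD : IsSelfAdjoint D)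
    (h : ∀ x : H, (⟪x, D x⟫_ℂ).re = 0) : D = 0 := by
  have h0 : ∀ x : H, ⟪(D : H →ₗ[ℂ] H) x, x⟫_ℂ = 0 := by
    intro x
    have := selfAdj_inner_self_real hD x
    rw [h x] at this
    have h1 : ⟪x, D x⟫_ℂ = 0 := by simpa using this
    rw [← inner_conj_symm, ContinuousLinearMap.coe_coe, h1, map_zero]
  have := (inner_map_self_eq_zero (D : H →ₗ[ℂ] H)).1 h0
  ext x
  have := congrFun (congrArg (fun f : H →ₗ[ℂ] H => (f : H → H)) this) x
  simpa using this

variable {ι : Type*} (b : HilbertBasis ι ℂ H)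

/-- Trace of a rank-one operator along the basis. -/
lemma hasSum_rankOne {C : H →L[ℂ] H} {v w : H} (hC : ∀ z, C z = ⟪v, z⟫_ℂ • w) :
    HasSum (fun i => (⟪b i, C (b i)⟫_ℂ).re) ((⟪v, w⟫_ℂ).re) := by
  have h0 : HasSum (fun i => ⟪v, b i⟫_ℂ * ⟪b i, w⟫_ℂ) ⟪v, w⟫_ℂ :=
    b.tsum_inner_mul_inner v w ▸ (b.summable_inner_mul_inner v w).hasSum
  have h1 := Complex.hasSum_re h0
  refine h1.congr_fun fun i => ?_
  rw [hC, inner_smul_right]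

lemma parseval_sq (x : H) : HasSum (fun j => ‖⟪b j, x⟫_ℂ‖ ^ 2) (‖x‖ ^ 2) := by
  have h0 : HasSum (fun i => ⟪x, b i⟫_ℂ * ⟪b i, x⟫_ℂ) ⟪x, x⟫_ℂ :=
    b.tsum_inner_mul_inner x x ▸ (b.summable_inner_mul_inner x x).hasSum
  have h1 := Complex.hasSum_re h0
  rw [show (⟪x, x⟫_ℂ).re = ‖x‖ ^ 2 from inner_self_re x] at h1
  have key : ∀ z : ℂ, ((starRingEnd ℂ) z * z).re = ‖z‖ ^ 2 := fun z => by
    rw [mul_comm, Complex.mul_conj]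
    simp [Complex.normSq_eq_norm_sq, ← Complex.ofReal_pow]
  refine h1.congr_fun fun i => ?_
  rw [← inner_conj_symm x (b i), key]

/-- If `T†` is Hilbert–Schmidt along `b` then so is `T`. -/
lemma summable_sq_norm_of_adjoint (T : H →L[ℂ] H)
    (hT : Summable fun j => ‖ContinuousLinearMap.adjoint T (b j)‖ ^ 2) :
    Summable fun i => ‖T (b i)‖ ^ 2 := by
  set T' := ContinuousLinearMap.adjoint T with hT'
  have hterm : ∀ (j : ι) (i : ι), ‖⟪b j, T (b i)⟫_ℂ‖ ^ 2 = ‖⟪b i, T' (b j)⟫_ℂ‖ ^ 2 := by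
    intro j i
    rw [show ⟪b j, T (b i)⟫_ℂ = ⟪T' (b j), b i⟫_ℂ from
      (ContinuousLinearMap.adjoint_inner_left T (b i) (b j)).symm,
      ← inner_conj_symm (T' (b j)) (b i)]
    simp only [Complex.norm_conj]
  have hbessel : ∀ (s : Finset ι) (j : ι),
      ∑ i ∈ s, ‖⟪b j, T (b i)⟫_ℂ‖ ^ 2 ≤ ‖T' (b j)‖ ^ 2 := by
    intro s j
    calc ∑ i ∈ s, ‖⟪b j, T (b i)⟫_ℂ‖ ^ 2 = ∑ i ∈ s, ‖⟪b i, T' (b j)⟫_ℂ‖ ^ 2 :=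
          Finset.sum_congr rfl (fun i _ => hterm j i)
      _ ≤ ‖T' (b j)‖ ^ 2 := b.orthonormal.sum_inner_products_le _
  refine summable_of_sum_le (c := ∑' j, ‖T' (b j)‖ ^ 2) (fun i => by positivity) (fun s => ?_)
  have key : ∀ i ∈ s, ‖T (b i)‖ ^ 2 = ∑' j, ‖⟪b j, T (b i)⟫_ℂ‖ ^ 2 := fun i _ =>
    ((parseval_sq b (T (b i))).tsum_eq).symm
  rw [Finset.sum_congr rfl key, ← Summable.tsum_finsetSum (fun i _ => (parseval_sq b (T (b i))).summable)]
  refine Summable.tsum_le_tsum (fun j => hbessel s j) ?_ hT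
  exact Summable.of_nonneg_of_le (fun j => by positivity) (fun j => hbessel s j) hT

/-- Positive trace-class composed with a bounded operator has summable diagonal. -/
lemma summable_comp {U : H →L[ℂ] H} (hUpos : U.IsPositive)
    (hUsum : Summable fun i => (⟪b i, U (b i)⟫_ℂ).re) (A : H →L[ℂ] H) :
    Summable fun i => (⟪b i, (U * A) (b i)⟫_ℂ).re := by
  obtain ⟨S, hSpos, hSS⟩ := exists_sqrt hUpos
  have hdiag : ∀ z : H, ‖S z‖ ^ 2 = (⟪z, U z⟫_ℂ).re := by
    intro z
    rw [← hSS, ContinuousLinearMap.mul_apply, ← selfAdj_inner_move hSpos.isSelfAdjoint, inner_self_re]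
  have h1 : Summable fun i => ‖S (b i)‖ ^ 2 := by
    refine hUsum.congr fun i => (hdiag (b i)).symm
  have h2 : Summable fun i => ‖S (A (b i))‖ ^ 2 := by
    have := summable_sq_norm_of_adjoint b (S ∘L A) ?_
    · exact this.congr fun i => by simp
    · have hadj : ContinuousLinearMap.adjoint (S ∘L A)
          = ContinuousLinearMap.adjoint A ∘L S := by
        rw [ContinuousLinearMap.adjoint_comp, hSpos.isSelfAdjoint.adjoint_eq]
      rw [hadj]
      refine Summable.of_nonneg_of_le (fun j => by positivity) (fun j => ?_)
        (h1.mul_left (‖ContinuousLinearMap.adjoint A‖ ^ 2))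
      simp only [ContinuousLinearMap.coe_comp', Function.comp_apply]
      calc ‖ContinuousLinearMap.adjoint A (S (b j))‖ ^ 2
          ≤ (‖ContinuousLinearMap.adjoint A‖ * ‖S (b j)‖) ^ 2 := by
            refine pow_le_pow_left₀ (norm_nonneg _) (ContinuousLinearMap.le_opNorm _ _) 2
        _ = ‖ContinuousLinearMap.adjoint A‖ ^ 2 * ‖S (b j)‖ ^ 2 := by ring
  refine Summable.of_abs ?_
  refine Summable.of_nonneg_of_le (fun i => abs_nonneg _) (fun i => ?_)
    (((h1.add h2).div_const 2))
  have hinner : ⟪b i, (U * A) (b i)⟫_ℂ = ⟪S (b i), S (A (b i))⟫_ℂ := by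
    rw [← hSS, ContinuousLinearMap.mul_apply, ContinuousLinearMap.mul_apply,
      ← selfAdj_inner_move hSpos.isSelfAdjoint]
  rw [hinner]
  calc |(⟪S (b i), S (A (b i))⟫_ℂ).re| ≤ ‖⟪S (b i), S (A (b i))⟫_ℂ‖ :=
        Complex.abs_re_le_norm _
    _ ≤ ‖S (b i)‖ * ‖S (A (b i))‖ := norm_inner_le_norm _ _
    _ ≤ (‖S (b i)‖ ^ 2 + ‖S (A (b i))‖ ^ 2) / 2 := by nlinarith [sq_nonneg (‖S (b i)‖ - ‖S (A (b i))‖)]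

lemma conj_mul_re (z : ℂ) : ((starRingEnd ℂ) z * z).re = ‖z‖ ^ 2 := by
  rw [mul_comm, Complex.mul_conj]
  simp [Complex.normSq_eq_norm_sq, ← Complex.ofReal_pow]

lemma re_symm (x y : H) : (⟪x, y⟫_ℂ).re = (⟪y, x⟫_ℂ).re := by
  simpa using inner_re_symm (𝕜 := ℂ) x y

lemma pos_re_nonneg {U : H →L[ℂ] H} (hU : U.IsPositive) (x : H) : 0 ≤ (⟪x, U x⟫_ℂ).re := by
  simpa using hU.re_inner_nonneg_right x

/-- rank one projection-like operator `z ↦ ⟪x,z⟫ • x`. -/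
noncomputable def rk (x : H) : H →L[ℂ] H := (innerSL ℂ x).smulRight x

lemma rk_apply (x z : H) : rk x z = ⟪x, z⟫_ℂ • x := rfl

lemma rk_selfAdjoint (x : H) : IsSelfAdjoint (rk x) := by
  have h : rk x = ContinuousLinearMap.adjoint (rk x) :=
    (ContinuousLinearMap.eq_adjoint_iff (rk x) (rk x)).2 (by
      intro u v
      simp only [rk_apply, inner_smul_left, inner_smul_right]
      rw [inner_conj_symm, mul_comm])
  rw [IsSelfAdjoint, ContinuousLinearMap.star_eq_adjoint]
  exact h.symm

lemma trExp_eq_of_rankOne {T : H →L[ℂ] H} {v w : H} (hT : ∀ z, T z = ⟪v, z⟫_ℂ • w)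
    (A : H →L[ℂ] H) :
    trExp b T A = (⟪ContinuousLinearMap.adjoint A v, w⟫_ℂ).re ∧
      Summable fun i => (⟪b i, (T * A) (b i)⟫_ℂ).re := by
  have hC : ∀ z, (T * A) z = ⟪ContinuousLinearMap.adjoint A v, z⟫_ℂ • w := by
    intro z
    rw [ContinuousLinearMap.mul_apply, hT, ContinuousLinearMap.adjoint_inner_left]
  have h := hasSum_rankOne b hC
  exact ⟨h.tsum_eq, h.summable⟩

lemma trExp_rk (T : H →L[ℂ] H) (x : H) : trExp b T (rk x) = (⟪x, T x⟫_ℂ).re := by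
  have hC : ∀ z, (T * rk x) z = ⟪x, z⟫_ℂ • (T x) := by
    intro z
    rw [ContinuousLinearMap.mul_apply, rk_apply, map_smul]
  exact (hasSum_rankOne b hC).tsum_eq

/-- Structure of a positive operator vanishing on the orthocomplement of a unit vector. -/
lemma rank_one_structure {U' : H →L[ℂ] H} (hU' : U'.IsPositive) {e : H} (hee : ⟪e, e⟫_ℂ = 1)
    (horth : ∀ x, ⟪e, x⟫_ℂ = 0 → U' x = 0) :
    ∀ x, U' x = ⟪e, x⟫_ℂ • (((⟪e, U' e⟫_ℂ).re : ℂ) • e) := by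
  have hUe : U' e = ⟪e, U' e⟫_ℂ • e := by
    set w := U' e - ⟪e, U' e⟫_ℂ • e with hw
    have hew : ⟪e, w⟫_ℂ = 0 := by
      rw [hw, inner_sub_right, inner_smul_right, hee, mul_one, sub_self]
    have hUw : U' w = 0 := horth w hew
    have hwe : ⟪w, e⟫_ℂ = 0 := by
      rw [← inner_conj_symm, hew, map_zero]
    have hww : ⟪w, w⟫_ℂ = 0 := by
      have h1 : ⟪w, U' e⟫_ℂ = 0 := by
        rw [← selfAdj_inner_move hU'.isSelfAdjoint, hUw, inner_zero_left]
      have h2 : ⟪w, U' e⟫_ℂ = ⟪w, w⟫_ℂ := by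
        have : U' e = ⟪e, U' e⟫_ℂ • e + w := by rw [hw]; abel
        rw [this, inner_add_right, inner_smul_right, hwe, mul_zero, zero_add]
      rw [← h2, h1]
    have : w = 0 := inner_self_eq_zero.1 hww
    have := sub_eq_zero.1 this
    linear_combination (norm := module) this
  intro x
  have hdec : x = ⟪e, x⟫_ℂ • e + (x - ⟪e, x⟫_ℂ • e) := by abel
  have hperp : ⟪e, x - ⟪e, x⟫_ℂ • e⟫_ℂ = 0 := by
    rw [inner_sub_right, inner_smul_right, hee, mul_one, sub_self]
  calc U' x = U' (⟪e, x⟫_ℂ • e + (x - ⟪e, x⟫_ℂ • e)) := by rw [← hdec]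
    _ = ⟪e, x⟫_ℂ • U' e + U' (x - ⟪e, x⟫_ℂ • e) := by rw [map_add, map_smul]
    _ = ⟪e, x⟫_ℂ • U' e := by rw [horth _ hperp, add_zero]
    _ = ⟪e, x⟫_ℂ • (((⟪e, U' e⟫_ℂ).re : ℂ) • e) := by
        rw [← selfAdj_inner_self_real hU'.isSelfAdjoint e, ← hUe]

end VNaux

open VNaux ContinuousLinearMap in
/-- Von Neumann's characterization of the pure (homogeneous) expectation-value functionals:
if `A ↦ Tr(UA)` (for positive trace-class `U ≠ 0`) is pure, then `U = λ P_e` for a unit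
vector `e` and `λ > 0`; conversely, `A ↦ ⟨e, Ae⟩` is pure for every unit vector `e`. -/
theorem stmt_9 {H : Type*} [NormedAddCommGroup H] [InnerProductSpace ℂ H] [CompleteSpace H]
    {ι : Type*} (b : HilbertBasis ι ℂ H) :
    (∀ U : H →L[ℂ] H, IsPosTraceClass b U → U ≠ 0 →
      (∀ U' U'' : H →L[ℂ] H, IsPosTraceClass b U' → IsPosTraceClass b U'' →
        (∀ A : H →L[ℂ] H, IsSelfAdjoint A → trExp b U A = trExp b U' A + trExp b U'' A) →
        ∃ c' c'' : ℝ, 0 ≤ c' ∧ 0 ≤ c'' ∧ c' + c'' = 1 ∧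
          (∀ A : H →L[ℂ] H, IsSelfAdjoint A → trExp b U' A = c' * trExp b U A) ∧
          (∀ A : H →L[ℂ] H, IsSelfAdjoint A → trExp b U'' A = c'' * trExp b U A)) →
      ∃ (e : H) (l : ℝ), ‖e‖ = 1 ∧ 0 < l ∧ ∀ x : H, U x = l • (⟪e, x⟫_ℂ • e)) ∧
    (∀ e : H, ‖e‖ = 1 →
      ∀ E' E'' : (H →L[ℂ] H) → ℝ,
        (∃ U' : H →L[ℂ] H, IsPosTraceClass b U' ∧
          ∀ A : H →L[ℂ] H, IsSelfAdjoint A → E' A = trExp b U' A) →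
        (∃ U'' : H →L[ℂ] H, IsPosTraceClass b U'' ∧
          ∀ A : H →L[ℂ] H, IsSelfAdjoint A → E'' A = trExp b U'' A) →
        (∀ A : H →L[ℂ] H, IsSelfAdjoint A → (⟪e, A e⟫_ℂ).re = E' A + E'' A) →
        ∃ c' c'' : ℝ, 0 ≤ c' ∧ 0 ≤ c'' ∧ c' + c'' = 1 ∧
          (∀ A : H →L[ℂ] H, IsSelfAdjoint A → E' A = c' * (⟪e, A e⟫_ℂ).re) ∧
          (∀ A : H →L[ℂ] H, IsSelfAdjoint A → E'' A = c'' * (⟪e, A e⟫_ℂ).re)) := by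
  constructor
  · -- direction 1
    intro U hU hU0 hpure
    obtain ⟨hUpos, hUsum⟩ := hU
    have hex : ∃ f : H, (⟪f, U f⟫_ℂ).re ≠ 0 := by
      by_contra h
      push_neg at h
      exact hU0 (by ext x; simpa using pos_apply_eq_zero hUpos (h x))
    obtain ⟨f, hf⟩ := hex
    set t := (⟪f, U f⟫_ℂ).re with ht
    have htpos : 0 < t := lt_of_le_of_ne (pos_re_nonneg hUpos f) (Ne.symm hf)
    set g := U f with hg
    set U' : H →L[ℂ] H := ((t : ℂ))⁻¹ • rk g with hU'def
    have hU'form : ∀ z, U' z = ⟪g, z⟫_ℂ • (((t : ℂ))⁻¹ • g) := by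
      intro z
      rw [hU'def, ContinuousLinearMap.smul_apply, rk_apply, smul_comm]
    have hU'inner : ∀ x, ⟪x, U' x⟫_ℂ = ((t⁻¹ * ‖⟪g, x⟫_ℂ‖ ^ 2 : ℝ) : ℂ) := by
      intro x
      rw [hU'form x, inner_smul_right, inner_smul_right,
        show ⟪x, g⟫_ℂ = (starRingEnd ℂ) ⟪g, x⟫_ℂ from (inner_conj_symm x g).symm]
      calc ⟪g, x⟫_ℂ * (((t : ℂ))⁻¹ * (starRingEnd ℂ) ⟪g, x⟫_ℂ)
          = ((t : ℂ))⁻¹ * (⟪g, x⟫_ℂ * (starRingEnd ℂ) ⟪g, x⟫_ℂ) := by ring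
        _ = ((t : ℂ))⁻¹ * ((Complex.normSq ⟪g, x⟫_ℂ : ℝ) : ℂ) := by rw [Complex.mul_conj]
        _ = ((t⁻¹ * ‖⟪g, x⟫_ℂ‖ ^ 2 : ℝ) : ℂ) := by
            push_cast [Complex.normSq_eq_norm_sq]
            ring
    have hU'sa : IsSelfAdjoint U' := by
      refine IsSelfAdjoint.smul ?_ (rk_selfAdjoint g)
      rw [show ((t : ℂ))⁻¹ = ((t⁻¹ : ℝ) : ℂ) from by push_cast ; ring]
      exact Complex.conj_ofReal _
    have hU'pos : U'.IsPositive := by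
      refine isPositive_def'.mpr ⟨hU'sa, fun x => ?_⟩
      have : (⟪x, U' x⟫_ℂ).re = t⁻¹ * ‖⟪g, x⟫_ℂ‖ ^ 2 := by rw [hU'inner, Complex.ofReal_re]
      have h' : (0:ℝ) ≤ t⁻¹ * ‖⟪g, x⟫_ℂ‖ ^ 2 := by positivity
      have hrfl : U'.reApplyInnerSelf x = (⟪U' x, x⟫_ℂ).re := rfl
      rw [hrfl, ← re_symm x (U' x), this]
      exact h'
    have hU'sum : Summable fun i => (⟪b i, U' (b i)⟫_ℂ).re := by
      have h := hasSum_rankOne b hU'form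
      exact h.summable
    have hU'tc : IsPosTraceClass b U' := ⟨hU'pos, hU'sum⟩
    set U'' : H →L[ℂ] H := U - U' with hU''def
    have hU''sa : IsSelfAdjoint U'' := hUpos.isSelfAdjoint.sub hU'sa
    have hre : ∀ x, (⟪x, U'' x⟫_ℂ).re = (⟪x, U x⟫_ℂ).re - (⟪x, U' x⟫_ℂ).re := by
      intro x
      rw [hU''def]
      simp [inner_sub_right]
    have hU''pos : U''.IsPositive := by
      refine isPositive_def'.mpr ⟨hU''sa, fun x => ?_⟩
      have hcs := pos_inner_sq_le hUpos f x
      have hU'x : (⟪x, U' x⟫_ℂ).re = t⁻¹ * ‖⟪g, x⟫_ℂ‖ ^ 2 := by rw [hU'inner, Complex.ofReal_re]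
      have key : (⟪x, U' x⟫_ℂ).re ≤ (⟪x, U x⟫_ℂ).re := by
        rw [hU'x]
        rw [inv_mul_le_iff₀ htpos]
        calc ‖⟪g, x⟫_ℂ‖ ^ 2 = ‖⟪U f, x⟫_ℂ‖ ^ 2 := by rw [hg]
          _ ≤ (⟪f, U f⟫_ℂ).re * (⟪x, U x⟫_ℂ).re := hcs
          _ = t * (⟪x, U x⟫_ℂ).re := by rw [← ht]
      have h0 : (0:ℝ) ≤ (⟪x, U'' x⟫_ℂ).re := by rw [hre x]; linarith
      have hrfl : U''.reApplyInnerSelf x = (⟪U'' x, x⟫_ℂ).re := rfl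
      rw [hrfl, ← re_symm x (U'' x)]
      exact h0
    have hU''sum : Summable fun i => (⟪b i, U'' (b i)⟫_ℂ).re := by
      refine (hUsum.sub hU'sum).congr fun i => ?_
      rw [← hre]
    have hadd : ∀ A : H →L[ℂ] H, IsSelfAdjoint A →
        trExp b U A = trExp b U' A + trExp b U'' A := by
      intro A _
      have sU := summable_comp b hUpos hUsum A
      have sU' := (trExp_eq_of_rankOne b hU'form A).2
      have hpt : ∀ i, (⟪b i, (U'' * A) (b i)⟫_ℂ).re
          = (⟪b i, (U * A) (b i)⟫_ℂ).re - (⟪b i, (U' * A) (b i)⟫_ℂ).re := by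
        intro i
        simp [hU''def, ContinuousLinearMap.mul_apply, ContinuousLinearMap.sub_apply,
          inner_sub_right]
      have sU'' : Summable fun i => (⟪b i, (U'' * A) (b i)⟫_ℂ).re :=
        (sU.sub sU').congr fun i => (hpt i).symm
      have : trExp b U A = ∑' i, ((⟪b i, (U' * A) (b i)⟫_ℂ).re
          + (⟪b i, (U'' * A) (b i)⟫_ℂ).re) := by
        refine tsum_congr fun i => ?_
        rw [hpt i]
        ring
      rw [this, Summable.tsum_add sU' sU'']
      rfl
    obtain ⟨c', c'', hc'0, hc''0, hcsum, h1, _h2⟩ :=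
      hpure U' U'' hU'tc ⟨hU''pos, hU''sum⟩ hadd
    have h1E : ∀ x : H, (⟪x, U' x⟫_ℂ).re = c' * (⟪x, U x⟫_ℂ).re := by
      intro x
      have := h1 (rk x) (rk_selfAdjoint x)
      rwa [trExp_rk, trExp_rk] at this
    have hDsa : IsSelfAdjoint (U' - (c' : ℂ) • U) := by
      refine hU'sa.sub (IsSelfAdjoint.smul (Complex.conj_ofReal _) hUpos.isSelfAdjoint)
    have hD0 : U' - (c' : ℂ) • U = 0 := by
      refine eq_zero_of_re_inner_zero hDsa fun x => ?_
      have hsm : (⟪x, ((c' : ℂ) • U) x⟫_ℂ) = (c' : ℂ) * ⟪x, U x⟫_ℂ := by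
        rw [ContinuousLinearMap.smul_apply, inner_smul_right]
      have : (⟪x, (U' - (c' : ℂ) • U) x⟫_ℂ).re
          = (⟪x, U' x⟫_ℂ).re - c' * (⟪x, U x⟫_ℂ).re := by
        rw [ContinuousLinearMap.sub_apply, inner_sub_right, Complex.sub_re, hsm,
          Complex.re_ofReal_mul]
      rw [this, h1E x, sub_self]
    have hU'U : U' = (c' : ℂ) • U := sub_eq_zero.1 hD0
    -- evaluate at f to get c' = 1
    have hgf : ⟪g, f⟫_ℂ = (t : ℂ) := by
      have h1 : ⟪f, g⟫_ℂ = ((⟪f, g⟫_ℂ).re : ℂ) := by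
        rw [hg]
        exact selfAdj_inner_self_real hUpos.isSelfAdjoint f
      rw [← inner_conj_symm g f, h1, Complex.conj_ofReal, ← ht]
    have hUf' : (⟪f, U' f⟫_ℂ).re = t := by
      rw [hU'inner f, hgf, Complex.ofReal_re,
        show ‖((t : ℝ) : ℂ)‖ = |t| from RCLike.norm_ofReal t, abs_of_pos htpos]
      field_simp
    have hc1 : c' = 1 := by
      have h := h1E f
      rw [hUf', ← ht] at h
      have h' : c' * t = 1 * t := by linarith
      exact mul_right_cancel₀ hf h'
    have hgne : g ≠ 0 := by
      intro h0
      rw [hg] at h0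
      apply hf
      rw [ht, hg, h0, inner_zero_right]
      simp
    have hns : ‖g‖ ≠ 0 := norm_ne_zero_iff.2 hgne
    refine ⟨‖g‖⁻¹ • g, t⁻¹ * ‖g‖ ^ 2,
      by rw [norm_smul, norm_inv, norm_norm, inv_mul_cancel₀ hns],
      mul_pos (inv_pos.2 htpos) (pow_pos (norm_pos_iff.2 hgne) 2), ?_⟩
    intro x
    have hU'eqU : U' = U := by rw [hU'U, hc1]; simp
    rw [← hU'eqU, hU'form]
    have h1 : ⟪‖g‖⁻¹ • g, x⟫_ℂ = ((‖g‖⁻¹ : ℝ) : ℂ) * ⟪g, x⟫_ℂ := by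
      rw [RCLike.real_smul_eq_coe_smul (K := ℂ) (‖g‖⁻¹) g, inner_smul_left]
      norm_num
    rw [h1, RCLike.real_smul_eq_coe_smul (K := ℂ) (t⁻¹ * ‖g‖ ^ 2),
      RCLike.real_smul_eq_coe_smul (K := ℂ) (‖g‖⁻¹) g]
    simp only [smul_smul]
    congr 1
    have hgc : ((‖g‖ : ℝ) : ℂ) ≠ 0 := by exact_mod_cast hns
    push_cast
    have h2 : ((‖g‖ : ℝ) : ℂ) * ((‖g‖ : ℝ) : ℂ)⁻¹ = 1 := mul_inv_cancel₀ hgc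
    calc ⟪g, x⟫_ℂ * ((t : ℂ))⁻¹
        = ((t : ℂ))⁻¹ * ⟪g, x⟫_ℂ * ((((‖g‖ : ℝ) : ℂ)) * (((‖g‖ : ℝ) : ℂ))⁻¹)
          * ((((‖g‖ : ℝ) : ℂ)) * (((‖g‖ : ℝ) : ℂ))⁻¹) := by rw [h2]; ring
      _ = ((t : ℂ))⁻¹ * ((‖g‖ : ℝ) : ℂ) ^ 2 * ((((‖g‖ : ℝ) : ℂ))⁻¹ * ⟪g, x⟫_ℂ
          * (((‖g‖ : ℝ) : ℂ))⁻¹) := by ring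
  · -- direction 2
    intro e he E' E'' hE'ex hE''ex hadd
    obtain ⟨U', ⟨hU'pos, hU'sum⟩, hE'⟩ := hE'ex
    obtain ⟨U'', ⟨hU''pos, hU''sum⟩, hE''⟩ := hE''ex
    have hee : ⟪e, e⟫_ℂ = 1 := by
      rw [inner_self_eq_norm_sq_to_K, he]
      norm_num
    have hstar : ∀ x : H, ‖⟪e, x⟫_ℂ‖ ^ 2 = (⟪x, U' x⟫_ℂ).re + (⟪x, U'' x⟫_ℂ).re := by
      intro x
      have h := hadd (rk x) (rk_selfAdjoint x)
      rw [hE' _ (rk_selfAdjoint x), hE'' _ (rk_selfAdjoint x), trExp_rk, trExp_rk] at h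
      rw [← h, rk_apply, inner_smul_right,
        show ⟪x, e⟫_ℂ = (starRingEnd ℂ) ⟪e, x⟫_ℂ from (inner_conj_symm x e).symm,
        conj_mul_re]
    have horth : ∀ x : H, ⟪e, x⟫_ℂ = 0 → U' x = 0 ∧ U'' x = 0 := by
      intro x hx
      have h := hstar x
      rw [hx] at h
      simp only [norm_zero] at h
      have h1 := pos_re_nonneg hU'pos x
      have h2 := pos_re_nonneg hU''pos x
      have e1 : (⟪x, U' x⟫_ℂ).re = 0 := by nlinarith
      have e2 : (⟪x, U'' x⟫_ℂ).re = 0 := by nlinarith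
      exact ⟨pos_apply_eq_zero hU'pos e1, pos_apply_eq_zero hU''pos e2⟩
    have hform' := rank_one_structure hU'pos hee (fun x hx => (horth x hx).1)
    have hform'' := rank_one_structure hU''pos hee (fun x hx => (horth x hx).2)
    set c' := (⟪e, U' e⟫_ℂ).re with hc'
    set c'' := (⟪e, U'' e⟫_ℂ).re with hc''
    have hcsum : c' + c'' = 1 := by
      have h := hstar e
      rw [hee] at h
      simpa using h.symm
    have key : ∀ (V : H →L[ℂ] H), (∀ x, V x = ⟪e, x⟫_ℂ • (((⟪e, V e⟫_ℂ).re : ℂ) • e)) →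
        ∀ A : H →L[ℂ] H, IsSelfAdjoint A →
          trExp b V A = (⟪e, V e⟫_ℂ).re * (⟪e, A e⟫_ℂ).re := by
      intro V hV A hA
      have h := (trExp_eq_of_rankOne b hV A).1
      rw [h, hA.adjoint_eq, inner_smul_right]
      rw [show ((((⟪e, V e⟫_ℂ).re : ℂ)) * ⟪A e, e⟫_ℂ).re
          = (⟪e, V e⟫_ℂ).re * (⟪A e, e⟫_ℂ).re from by simp [Complex.re_ofReal_mul]]
      rw [re_symm (A e) e]
    refine ⟨c', c'', pos_re_nonneg hU'pos e, pos_re_nonneg hU''pos e, hcsum, ?_, ?_⟩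
    · intro A hA
      rw [hE' A hA, key U' hform' A hA]
    · intro A hA
      rw [hE'' A hA, key U'' hform'' A hA]
end

section
/- Suppose E(A) = Tr(UA) for a positive trace-class operator U on a Hilbert space of dimension at least 2, E(1) = 1, and E is dispersion-free, i.e. E(A²) = E(A)² for every bounded self-adjoint A. Then a contradiction follows: no such E exists. (Equivalently: there are no normalizable dispersion-free expectation-value functionals of the form A ↦ Tr(UA).) -/
open scoped InnerProductSpace

/-- There are no normalizable dispersion-free expectation-value functionals of the form
`A ↦ Tr(UA)` with `U` a positive trace-class operator, on a Hilbert space of dimension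
at least 2 (here: with a Hilbert basis indexed by a nontrivial type). -/
theorem stmt_10 {H : Type*} [NormedAddCommGroup H] [InnerProductSpace ℂ H] [CompleteSpace H]
    {ι : Type*} [Nontrivial ι] (b : HilbertBasis ι ℂ H)
    (U : H →L[ℂ] H) (hpos : U.IsPositive)
    (htc : Summable (fun i => (⟪b i, U (b i)⟫_ℂ).re))
    (hnorm : trExp b U 1 = 1)
    (hdisp : ∀ A : H →L[ℂ] H, IsSelfAdjoint A → trExp b U (A * A) = (trExp b U A) ^ 2) :
    False := by
  classical
  have hUsym : ∀ x y : H, ⟪U x, y⟫_ℂ = ⟪x, U y⟫_ℂ :=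
    (hpos.1)
  -- key: every unit vector has f e ∈ {0,1}, where f e = re ⟪e, U e⟫
  have key : ∀ e : H, ⟪e, e⟫_ℂ = 1 → (⟪e, U e⟫_ℂ).re = 0 ∨ (⟪e, U e⟫_ℂ).re = 1 := by
    intro e he
    set P : H →L[ℂ] H := (ContinuousLinearMap.toSpanSingleton ℂ e).comp (innerSL ℂ e) with hP
    have hPapp : ∀ x : H, P x = ⟪e, x⟫_ℂ • e := fun x => rfl
    have hPsa : IsSelfAdjoint P := by
      rw [ContinuousLinearMap.isSelfAdjoint_iff_isSymmetric]
      intro x y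
      simp [hPapp, inner_smul_left, inner_smul_right, inner_conj_symm]
      ring
    have hPP : P * P = P := by
      ext x
      simp [ContinuousLinearMap.mul_apply, hPapp, inner_smul_right, he]
      have hn : ‖e‖ ^ 2 = 1 := by
        rw [norm_sq_eq_re_inner (𝕜 := ℂ), he]; simp
      rw [show (‖e‖ : ℂ) ^ 2 = 1 by exact_mod_cast hn, mul_one]
    have htr : trExp b U P = (⟪e, U e⟫_ℂ).re := by
      have hs : HasSum (fun i => ⟪e, b i⟫_ℂ * ⟪b i, U e⟫_ℂ) ⟪e, U e⟫_ℂ :=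
        b.hasSum_inner_mul_inner e (U e)
      have hs' := hs.mapL Complex.reCLM
      have heq : (fun i => (⟪b i, (U * P) (b i)⟫_ℂ).re)
          = fun i => Complex.reCLM (⟪e, b i⟫_ℂ * ⟪b i, U e⟫_ℂ) := by
        funext i
        simp [ContinuousLinearMap.mul_apply, hPapp, map_smul, inner_smul_right]
      rw [trExp, heq]
      exact hs'.tsum_eq
    have hd := hdisp P hPsa
    rw [hPP, htr] at hd
    have h0 : (⟪e, U e⟫_ℂ).re * ((⟪e, U e⟫_ℂ).re - 1) = 0 := by nlinarith [hd]
    rcases mul_eq_zero.mp h0 with h | h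
    · exact Or.inl h
    · exact Or.inr (by linarith)
  have hunit : ∀ i : ι, ⟪b i, b i⟫_ℂ = 1 := by
    intro i
    simpa using (orthonormal_iff_ite.mp b.orthonormal) i i
  have hne : ∀ i j : ι, i ≠ j → ⟪b i, b j⟫_ℂ = 0 := by
    intro i j hij
    simpa [hij] using (orthonormal_iff_ite.mp b.orthonormal) i j
  have ha : ∀ i : ι, (⟪b i, U (b i)⟫_ℂ).re = 0 ∨ (⟪b i, U (b i)⟫_ℂ).re = 1 :=
    fun i => key _ (hunit i)
  have hanon : ∀ i : ι, 0 ≤ (⟪b i, U (b i)⟫_ℂ).re := by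
    intro i
    exact (Complex.nonneg_iff.mp (hpos.inner_nonneg_right (b i))).1
  have hsum1 : ∑' i, (⟪b i, U (b i)⟫_ℂ).re = 1 := by
    have h : trExp b U 1 = ∑' i, (⟪b i, U (b i)⟫_ℂ).re := by
      simp [trExp, mul_one]
    rw [← h]; exact hnorm
  -- find the unique index with value 1
  obtain ⟨i₀, hi₀⟩ : ∃ i : ι, (⟪b i, U (b i)⟫_ℂ).re = 1 := by
    by_contra h
    push_neg at h
    have hz : ∀ i : ι, (⟪b i, U (b i)⟫_ℂ).re = 0 := by
      intro i
      rcases ha i with h' | h'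
      · exact h'
      · exact absurd h' (h i)
    rw [tsum_congr hz] at hsum1
    simp at hsum1
  obtain ⟨j, hj⟩ := exists_ne i₀
  have haj : (⟪b j, U (b j)⟫_ℂ).re = 0 := by
    rcases ha j with h' | h'
    · exact h'
    · exfalso
      have hle : ∑ i ∈ ({i₀, j} : Finset ι), (⟪b i, U (b i)⟫_ℂ).re
          ≤ ∑' i, (⟪b i, U (b i)⟫_ℂ).re :=
        Summable.sum_le_tsum _ (fun i _ => hanon i) htc
      rw [Finset.sum_pair (Ne.symm hj)] at hle
      rw [hi₀, h', hsum1] at hle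
      linarith
  set x : ℝ := (⟪b i₀, U (b j)⟫_ℂ).re with hx
  have hsymre : (⟪b j, U (b i₀)⟫_ℂ).re = x := by
    have h1 : ⟪b j, U (b i₀)⟫_ℂ = ⟪U (b j), b i₀⟫_ℂ := (hUsym (b j) (b i₀)).symm
    have h2 : ⟪U (b j), b i₀⟫_ℂ = starRingEnd ℂ ⟪b i₀, U (b j)⟫_ℂ := (inner_conj_symm _ _).symm
    rw [h1, h2, hx, Complex.conj_re]
  have hcross : ∀ α β : ℝ, α ^ 2 + β ^ 2 = 1 →
      (α ^ 2 + 2 * α * β * x = 0 ∨ α ^ 2 + 2 * α * β * x = 1) := by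
    intro α β hab
    set e : H := (α : ℂ) • b i₀ + (β : ℂ) • b j with hedef
    have he : ⟪e, e⟫_ℂ = 1 := by
      simp only [hedef, inner_add_left, inner_add_right, inner_smul_left, inner_smul_right,
        hunit, hne i₀ j hj.symm, hne j i₀ hj, Complex.conj_ofReal, mul_zero, mul_one,
        add_zero, zero_add]
      rw [← Complex.ofReal_mul, ← Complex.ofReal_mul, ← Complex.ofReal_add]
      norm_cast
      nlinarith [hab]
    have hval : (⟪e, U e⟫_ℂ).re = α ^ 2 + 2 * α * β * x := by
      have hU : U e = (α : ℂ) • U (b i₀) + (β : ℂ) • U (b j) := by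
        simp [hedef, map_add, map_smul]
      rw [hU]
      simp only [hedef, inner_add_left, inner_add_right, inner_smul_left, inner_smul_right,
        Complex.conj_ofReal, Complex.add_re, Complex.mul_re, Complex.ofReal_re,
        Complex.ofReal_im, zero_mul, sub_zero]
      rw [hi₀, haj, hsymre, hx]
      ring
    have := key e he
    rw [hval] at this
    exact this
  have h1 := hcross (3 / 5) (4 / 5) (by norm_num)
  have h2 := hcross (5 / 13) (12 / 13) (by norm_num)
  rcases h1 with h1 | h1 <;> rcases h2 with h2 | h2 <;> linarith
end

section
/- Let Λ be a measurable space of 'local contextual pure states' for two spin-1/2 particles, where each λ assigns values λ_C(A) ∈ {-1, +1} to spin observables in measuring contexts C, satisfying locality: λ_{σ_{r₁}, σ_{r₂}}(σ_{r₁}) = λ_{σ_{r₁}}(σ_{r₁}) and similarly for σ_{r₂}. Then for any probability measure μ on Λ and any directions r₁, r₁', r₂, r₂', the expectations E(σ_{r₁}σ_{r₂}) = ∫ λ(σ_{r₁})λ(σ_{r₂}) dμ satisfy |E(σ_{r₁}σ_{r₂}) - E(σ_{r₁}σ_{r₂'})| + |E(σ_{r₁'}σ_{r₂}) + E(σ_{r₁'}σ_{r₂'})|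 ≤ 2. -/
open MeasureTheory

/-- The Bell/CHSH inequality for local contextual hidden-variable states: if
`a₁, a₂, b₁, b₂ : Λ → {-1,+1}` are measurable value assignments on a probability space
of pure states, then the corresponding product expectations satisfy
`|E(a₁b₁) - E(a₁b₂)| + |E(a₂b₁) + E(a₂b₂)| ≤ 2`. -/
theorem stmt_11 {Λ : Type*} [MeasurableSpace Λ] (μ : Measure Λ) [IsProbabilityMeasure μ]
    (a₁ a₂ b₁ b₂ : Λ → ℝ)
    (ha₁ : Measurable a₁) (ha₂ : Measurable a₂)
    (hb₁ : Measurable b₁) (hb₂ : Measurable b₂)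
    (hva₁ : ∀ x, a₁ x = -1 ∨ a₁ x = 1) (hva₂ : ∀ x, a₂ x = -1 ∨ a₂ x = 1)
    (hvb₁ : ∀ x, b₁ x = -1 ∨ b₁ x = 1) (hvb₂ : ∀ x, b₂ x = -1 ∨ b₂ x = 1) :
    |(∫ x, a₁ x * b₁ x ∂μ) - (∫ x, a₁ x * b₂ x ∂μ)| +
      |(∫ x, a₂ x * b₁ x ∂μ) + (∫ x, a₂ x * b₂ x ∂μ)| ≤ 2 := by
  have hint : ∀ (f g : Λ → ℝ), Measurable f → Measurable g →
      (∀ x, f x = -1 ∨ f x = 1) → (∀ x, g x = -1 ∨ g x = 1) →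
      Integrable (fun x => f x * g x) μ := by
    intro f g hf hg hvf hvg
    refine (integrable_const (1 : ℝ)).mono' (hf.mul hg).aestronglyMeasurable
      (Filter.Eventually.of_forall fun x => ?_)
    rcases hvf x with h1 | h1 <;> rcases hvg x with h2 | h2 <;> simp [h1, h2]
  have i11 := hint a₁ b₁ ha₁ hb₁ hva₁ hvb₁
  have i12 := hint a₁ b₂ ha₁ hb₂ hva₁ hvb₂
  have i21 := hint a₂ b₁ ha₂ hb₁ hva₂ hvb₁
  have i22 := hint a₂ b₂ ha₂ hb₂ hva₂ hvb₂
  have key : ∫ x, (|a₁ x * b₁ x - a₁ x * b₂ x| + |a₂ x * b₁ x + a₂ x * b₂ x|) ∂μ ≤ 2 := by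
    have : ∫ x, (2 : ℝ) ∂μ = 2 := by simp
    rw [← this]
    refine integral_mono ((i11.sub i12).abs.add (i21.add i22).abs) (integrable_const 2)
      fun x => ?_
    rcases hva₁ x with h1 | h1 <;> rcases hva₂ x with h2 | h2 <;>
      rcases hvb₁ x with h3 | h3 <;> rcases hvb₂ x with h4 | h4 <;>
      simp [h1, h2, h3, h4] <;> norm_num
  calc |(∫ x, a₁ x * b₁ x ∂μ) - (∫ x, a₁ x * b₂ x ∂μ)| +
      |(∫ x, a₂ x * b₁ x ∂μ) + (∫ x, a₂ x * b₂ x ∂μ)|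
      = |∫ x, (a₁ x * b₁ x - a₁ x * b₂ x) ∂μ| + |∫ x, (a₂ x * b₁ x + a₂ x * b₂ x) ∂μ| := by
        rw [integral_sub i11 i12, integral_add i21 i22]
    _ ≤ (∫ x, |a₁ x * b₁ x - a₁ x * b₂ x| ∂μ) + (∫ x, |a₂ x * b₁ x + a₂ x * b₂ x| ∂μ) :=
        add_le_add (by simpa [Real.norm_eq_abs] using
            norm_integral_le_integral_norm (fun x => a₁ x * b₁ x - a₁ x * b₂ x) (μ := μ))
          (by simpa [Real.norm_eq_abs] using
            norm_integral_le_integral_norm (fun x => a₂ x * b₁ x + a₂ x * b₂ x) (μ := μ))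
    _ = ∫ x, (|a₁ x * b₁ x - a₁ x * b₂ x| + |a₂ x * b₁ x + a₂ x * b₂ x|) ∂μ := by
        have h := integral_add (μ := μ) (i11.sub i12).abs (i21.add i22).abs
        simpa using h.symm
    _ ≤ 2 := key
end

section
/- If a₁, a₂, b₁, b₂ : Λ → [-1, 1] are measurable functions on a probability space (Λ, Σ, μ), then |∫a₁b₁ dμ - ∫a₁b₂ dμ| + |∫a₂b₁ dμ + ∫a₂b₂ dμ| ≤ 2. -/
open MeasureTheory

/-- The CHSH inequality for `[-1,1]`-valued measurable functions on a probability space: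
`|∫a₁b₁ - ∫a₁b₂| + |∫a₂b₁ + ∫a₂b₂| ≤ 2`. -/
theorem stmt_12 {Λ : Type*} [MeasurableSpace Λ] (μ : Measure Λ) [IsProbabilityMeasure μ]
    (a₁ a₂ b₁ b₂ : Λ → ℝ)
    (ha₁ : Measurable a₁) (ha₂ : Measurable a₂)
    (hb₁ : Measurable b₁) (hb₂ : Measurable b₂)
    (hva₁ : ∀ x, a₁ x ∈ Set.Icc (-1 : ℝ) 1) (hva₂ : ∀ x, a₂ x ∈ Set.Icc (-1 : ℝ) 1)
    (hvb₁ : ∀ x, b₁ x ∈ Set.Icc (-1 : ℝ) 1) (hvb₂ : ∀ x, b₂ x ∈ Set.Icc (-1 : ℝ) 1) :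
    |(∫ x, a₁ x * b₁ x ∂μ) - (∫ x, a₁ x * b₂ x ∂μ)| +
      |(∫ x, a₂ x * b₁ x ∂μ) + (∫ x, a₂ x * b₂ x ∂μ)| ≤ 2 := by
  have hbd : ∀ (a b : Λ → ℝ), (∀ x, a x ∈ Set.Icc (-1:ℝ) 1) → (∀ x, b x ∈ Set.Icc (-1:ℝ) 1) →
      Measurable a → Measurable b → Integrable (fun x => a x * b x) μ := by
    intro a b hva hvb ha hb
    refine (integrable_const (1:ℝ)).mono' ((ha.mul hb).aestronglyMeasurable) ?_
    filter_upwards with x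
    have := abs_mul (a x) (b x)
    have h1 := abs_le.mpr ⟨(hva x).1, (hva x).2⟩
    have h2 := abs_le.mpr ⟨(hvb x).1, (hvb x).2⟩
    calc ‖a x * b x‖ = |a x| * |b x| := by rw [Real.norm_eq_abs, abs_mul]
    _ ≤ 1 * 1 := mul_le_mul h1 h2 (abs_nonneg _) zero_le_one
    _ ≤ 1 := by norm_num
  have i11 := hbd a₁ b₁ hva₁ hvb₁ ha₁ hb₁
  have i12 := hbd a₁ b₂ hva₁ hvb₂ ha₁ hb₂
  have i21 := hbd a₂ b₁ hva₂ hvb₁ ha₂ hb₁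
  have i22 := hbd a₂ b₂ hva₂ hvb₂ ha₂ hb₂
  rw [← integral_sub i11 i12, ← integral_add i21 i22]
  calc |∫ x, (a₁ x * b₁ x - a₁ x * b₂ x) ∂μ| + |∫ x, (a₂ x * b₁ x + a₂ x * b₂ x) ∂μ|
      ≤ (∫ x, |a₁ x * b₁ x - a₁ x * b₂ x| ∂μ) + ∫ x, |a₂ x * b₁ x + a₂ x * b₂ x| ∂μ :=
        add_le_add (by simpa using norm_integral_le_integral_norm (μ := μ) (fun x => a₁ x * b₁ x - a₁ x * b₂ x)) (by simpa using norm_integral_le_integral_norm (μ := μ) (fun x => a₂ x * b₁ x + a₂ x * b₂ x))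
    _ = ∫ x, (|a₁ x * b₁ x - a₁ x * b₂ x| + |a₂ x * b₁ x + a₂ x * b₂ x|) ∂μ := by
        exact (integral_add (i11.sub i12).abs (i21.add i22).abs).symm
    _ ≤ ∫ _x, (2:ℝ) ∂μ := by
        refine integral_mono ((i11.sub i12).abs.add (i21.add i22).abs) (integrable_const 2) ?_
        intro x
        dsimp only
        have h1 := abs_le.mpr ⟨(hva₁ x).1, (hva₁ x).2⟩
        have h2 := abs_le.mpr ⟨(hva₂ x).1, (hva₂ x).2⟩
        have hb1 := abs_le.mpr ⟨(hvb₁ x).1, (hvb₁ x).2⟩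
        have hb2 := abs_le.mpr ⟨(hvb₂ x).1, (hvb₂ x).2⟩
        have e1 : |a₁ x * b₁ x - a₁ x * b₂ x| ≤ |b₁ x - b₂ x| := by
          rw [← mul_sub, abs_mul]
          nlinarith [abs_nonneg (b₁ x - b₂ x)]
        have e2 : |a₂ x * b₁ x + a₂ x * b₂ x| ≤ |b₁ x + b₂ x| := by
          rw [← mul_add, abs_mul]
          nlinarith [abs_nonneg (b₁ x + b₂ x)]
        have key : |b₁ x - b₂ x| + |b₁ x + b₂ x| ≤ 2 := by
          rcases abs_cases (b₁ x - b₂ x) with ⟨h, _⟩ | ⟨h, _⟩ <;>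
          rcases abs_cases (b₁ x + b₂ x) with ⟨h', _⟩ | ⟨h', _⟩ <;>
          rw [h, h'] <;> linarith [abs_le.mp hb1, abs_le.mp hb2]
        linarith
    _ = 2 := by simp
end

section
/- Tsirelson's bound: for any four self-adjoint operators A₁, A₂, A₃, A₄ on a Hilbert space with Aᵢ² = 1 (equivalently Aᵢ = 2Pᵢ − 1 for projections Pᵢ), where [A₁,A₃] = [A₁,A₄] = [A₂,A₃] = [A₂,A₄] = 0, and for any unit vector ψ, one has |⟨ψ,A₁A₃ψ⟩ − ⟨ψ,A₁A₄ψ⟩| + |⟨ψ,A₂A₃ψ⟩ + ⟨ψ,A₂A₄ψ⟩| ≤ 2√2. -/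
open scoped InnerProductSpace

/-- Tsirelson's bound: for self-adjoint operators `A₁, A₂, A₃, A₄` with `Aᵢ² = 1`, where each
of `A₁, A₂` commutes with each of `A₃, A₄`, and any unit vector `ψ`, the CHSH expression of
the quantum expectation values is bounded by `2√2`. -/
theorem stmt_15 {H : Type*} [NormedAddCommGroup H] [InnerProductSpace ℂ H] [CompleteSpace H]
    (A₁ A₂ A₃ A₄ : H →L[ℂ] H)
    (h₁ : IsSelfAdjoint A₁) (h₂ : IsSelfAdjoint A₂)
    (h₃ : IsSelfAdjoint A₃) (h₄ : IsSelfAdjoint A₄)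
    (hsq₁ : A₁ * A₁ = 1) (hsq₂ : A₂ * A₂ = 1) (hsq₃ : A₃ * A₃ = 1) (hsq₄ : A₄ * A₄ = 1)
    (hc₁₃ : Commute A₁ A₃) (hc₁₄ : Commute A₁ A₄)
    (hc₂₃ : Commute A₂ A₃) (hc₂₄ : Commute A₂ A₄)
    (ψ : H) (hψ : ‖ψ‖ = 1) :
    |(⟪ψ, (A₁ * A₃) ψ⟫_ℂ).re - (⟪ψ, (A₁ * A₄) ψ⟫_ℂ).re| +
      |(⟪ψ, (A₂ * A₃) ψ⟫_ℂ).re + (⟪ψ, (A₂ * A₄) ψ⟫_ℂ).re| ≤ 2 * Real.sqrt 2 := by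
  -- norms of the images
  have hnorm : ∀ (A : H →L[ℂ] H), IsSelfAdjoint A → A * A = 1 → ‖A ψ‖ = 1 := by
    intro A hA hsq
    have h1 : (⟪A ψ, A ψ⟫_ℂ) = ⟪ψ, ψ⟫_ℂ := by
      have := hA.isSymmetric (A ψ) ψ
      calc ⟪A ψ, A ψ⟫_ℂ = ⟪A (A ψ), ψ⟫_ℂ := (hA.isSymmetric (A ψ) ψ).symm
        _ = ⟪(A * A) ψ, ψ⟫_ℂ := by rw [ContinuousLinearMap.mul_apply]
        _ = ⟪ψ, ψ⟫_ℂ := by rw [hsq]; rfl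
    have h2 : ‖A ψ‖ ^ 2 = ‖ψ‖ ^ 2 := by
      rw [← @inner_self_eq_norm_sq ℂ, ← @inner_self_eq_norm_sq ℂ, h1]
    have hn : (0:ℝ) ≤ ‖A ψ‖ := norm_nonneg _
    nlinarith [norm_nonneg ψ]
  have hn1 := hnorm A₁ h₁ hsq₁
  have hn2 := hnorm A₂ h₂ hsq₂
  have hn3 := hnorm A₃ h₃ hsq₃
  have hn4 := hnorm A₄ h₄ hsq₄
  -- rewrite the expectation values as inner products of images
  have hre : ∀ (A B : H →L[ℂ] H), IsSelfAdjoint A →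
      ⟪ψ, (A * B) ψ⟫_ℂ = ⟪A ψ, B ψ⟫_ℂ := by
    intro A B hA
    rw [ContinuousLinearMap.mul_apply]
    exact (hA.isSymmetric ψ (B ψ)).symm
  rw [hre A₁ A₃ h₁, hre A₁ A₄ h₁, hre A₂ A₃ h₂, hre A₂ A₄ h₂]
  -- Cauchy–Schwarz bounds
  have key : ∀ (u v : H), |(⟪u, v⟫_ℂ).re| ≤ ‖u‖ * ‖v‖ := by
    intro u v
    calc |(⟪u, v⟫_ℂ).re| ≤ ‖(⟪u, v⟫_ℂ)‖ := Complex.abs_re_le_norm _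
      _ ≤ ‖u‖ * ‖v‖ := norm_inner_le_norm u v
  have b1 : |(⟪A₁ ψ, A₃ ψ⟫_ℂ).re - (⟪A₁ ψ, A₄ ψ⟫_ℂ).re| ≤ ‖A₃ ψ - A₄ ψ‖ := by
    have : (⟪A₁ ψ, A₃ ψ⟫_ℂ).re - (⟪A₁ ψ, A₄ ψ⟫_ℂ).re
        = (⟪A₁ ψ, A₃ ψ - A₄ ψ⟫_ℂ).re := by
      rw [inner_sub_right, Complex.sub_re]
    rw [this]
    simpa [hn1] using key (A₁ ψ) (A₃ ψ - A₄ ψ)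
  have b2 : |(⟪A₂ ψ, A₃ ψ⟫_ℂ).re + (⟪A₂ ψ, A₄ ψ⟫_ℂ).re| ≤ ‖A₃ ψ + A₄ ψ‖ := by
    have : (⟪A₂ ψ, A₃ ψ⟫_ℂ).re + (⟪A₂ ψ, A₄ ψ⟫_ℂ).re
        = (⟪A₂ ψ, A₃ ψ + A₄ ψ⟫_ℂ).re := by
      rw [inner_add_right, Complex.add_re]
    rw [this]
    simpa [hn2] using key (A₂ ψ) (A₃ ψ + A₄ ψ)
  -- parallelogram law
  have par := parallelogram_law_with_norm ℂ (A₃ ψ) (A₄ ψ)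
  have hs2 : Real.sqrt 2 * Real.sqrt 2 = 2 := Real.mul_self_sqrt (by norm_num)
  have hx : (0:ℝ) ≤ ‖A₃ ψ - A₄ ψ‖ := norm_nonneg _
  have hy : (0:ℝ) ≤ ‖A₃ ψ + A₄ ψ‖ := norm_nonneg _
  have hs : (0:ℝ) ≤ Real.sqrt 2 := Real.sqrt_nonneg 2
  nlinarith [sq_nonneg (‖A₃ ψ - A₄ ψ‖ - ‖A₃ ψ + A₄ ψ‖),
    sq_nonneg (‖A₃ ψ - A₄ ψ‖ + ‖A₃ ψ + A₄ ψ‖ - 2 * Real.sqrt 2)]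
end

section
/- For each probability function P on classical propositional formulas satisfying: (1) monotonicity, P(A) ≤ P(B) whenever A → B is a tautology, and (2) finite additivity, P(A ∨ B) = P(A) + P(B) whenever A ∧ B is contradictory; and for all propositions A₁, B₁, A₂, B₂: P(A₁ ∧ B₁) ≤ P(A₁ ∧ B₂) + P(A₂ ∧ B₁) + P(¬A₂ ∧ ¬B₂). -/
theorem subadd_aux {α : Type*} [BooleanAlgebra α] (P : α → ℝ)
    (hmono : ∀ x y : α, x ≤ y → P x ≤ P y)
    (hadd : ∀ x y : α, x ⊓ y = ⊥ → P (x ⊔ y) = P x + P y)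
    (x y : α) : P (x ⊔ y) ≤ P x + P y := by
  have h1 : x ⊔ y = x ⊔ (y ⊓ xᶜ) := by
    rw [sup_inf_left, sup_compl_eq_top, inf_top_eq]
  have h2 : x ⊓ (y ⊓ xᶜ) = ⊥ := by
    rw [inf_comm, inf_assoc, compl_inf_eq_bot, inf_bot_eq]
  rw [h1, hadd _ _ h2]
  exact add_le_add_right (hmono _ _ inf_le_left) _

/-- The Bell inequality of probabilistic logic: a monotone, finitely additive probability
function `P` with values in `[0,1]` on a Boolean algebra of propositions satisfies
`P(A₁ ∧ B₁) ≤ P(A₁ ∧ B₂) + P(A₂ ∧ B₁) + P(¬A₂ ∧ ¬B₂)`. -/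
theorem stmt_17 {α : Type*} [BooleanAlgebra α] (P : α → ℝ)
    (hrange : ∀ x, 0 ≤ P x ∧ P x ≤ 1)
    (hmono : ∀ x y : α, x ≤ y → P x ≤ P y)
    (hadd : ∀ x y : α, x ⊓ y = ⊥ → P (x ⊔ y) = P x + P y)
    (a₁ b₁ a₂ b₂ : α) :
    P (a₁ ⊓ b₁) ≤ P (a₁ ⊓ b₂) + P (a₂ ⊓ b₁) + P (a₂ᶜ ⊓ b₂ᶜ) := by
  have key : a₁ ⊓ b₁ ≤ ((a₁ ⊓ b₂) ⊔ (a₂ ⊓ b₁)) ⊔ (a₂ᶜ ⊓ b₂ᶜ) := by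
    have e1 : a₁ ⊓ b₁ = ((a₁ ⊓ b₁) ⊓ b₂) ⊔ ((a₁ ⊓ b₁) ⊓ b₂ᶜ) :=
      sup_inf_inf_compl.symm
    have e2 : (a₁ ⊓ b₁) ⊓ b₂ᶜ = (((a₁ ⊓ b₁) ⊓ b₂ᶜ) ⊓ a₂) ⊔ (((a₁ ⊓ b₁) ⊓ b₂ᶜ) ⊓ a₂ᶜ) :=
      sup_inf_inf_compl.symm
    rw [e1, e2]
    refine sup_le ?_ (sup_le ?_ ?_) <;>
    · first
      | exact le_sup_of_le_left (le_sup_of_le_left (le_inf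
          (inf_le_left.trans inf_le_left) inf_le_right))
      | exact le_sup_of_le_left (le_sup_of_le_right (le_inf inf_le_right
          (inf_le_left.trans (inf_le_left.trans inf_le_right))))
      | exact le_sup_of_le_right (le_inf inf_le_right (inf_le_left.trans inf_le_right))
  calc P (a₁ ⊓ b₁) ≤ P (((a₁ ⊓ b₂) ⊔ (a₂ ⊓ b₁)) ⊔ (a₂ᶜ ⊓ b₂ᶜ)) := hmono _ _ key
    _ ≤ P ((a₁ ⊓ b₂) ⊔ (a₂ ⊓ b₁)) + P (a₂ᶜ ⊓ b₂ᶜ) := subadd_aux P hmono hadd _ _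
    _ ≤ P (a₁ ⊓ b₂) + P (a₂ ⊓ b₁) + P (a₂ᶜ ⊓ b₂ᶜ) :=
        add_le_add_left (subadd_aux P hmono hadd _ _) _
end

section
/- Let C(𝔄) be the poset of abelian unital *-subalgebras of 𝔄 = Mₙ(ℂ). Define L₃ := {S : C(𝔄) → P(𝔄) : S(C) is a projection in C for all C, and S(C) ≤ S(D) whenever D ⊆ C}, ordered pointwise (S₁ ≤ S₂ iff S₁(C) ≤ S₂(C) for all C), with pointwise join and meet in the projection lattice, top ⊤(C) = 1, bottom ⊥(C) = 0, and implication (S₁ → S₂)(C) := ⋀{S₁(D)^⊥ ∨ S₂(D) : D ⊆ C}. Then L₃ is a Heyting algebra, and its pseudo-complement satisfies ¬S = ⊤ if S = ⊥ and ¬S = ⊥ otherwise; in particular the only regular elements of L₃ are ⊥ and ⊤. -/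
/-- The matrix algebra `𝔄 = Mₙ(ℂ)`. -/
abbrev MatAlg (n : ℕ) := Matrix (Fin n) (Fin n) ℂ

/-- A *-subalgebra of `Mₙ(ℂ)` is abelian if all its elements commute. -/
def IsAbelianSub {n : ℕ} (C : StarSubalgebra ℂ (MatAlg n)) : Prop :=
  ∀ a ∈ C, ∀ b ∈ C, a * b = b * a

/-- The poset `C(𝔄)` of abelian unital *-subalgebras of `Mₙ(ℂ)` (measuring contexts). -/
def Context (n : ℕ) := {C : StarSubalgebra ℂ (MatAlg n) // IsAbelianSub C}

/-- `P` is an orthogonal projection belonging to the context `C`. -/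
def IsProjIn {n : ℕ} (C : Context n) (P : MatAlg n) : Prop :=
  P ∈ C.1 ∧ star P = P ∧ P * P = P

/-- The order on projections: `P ≤ Q` iff `P * Q = P`. -/
def projLE {n : ℕ} (P Q : MatAlg n) : Prop := P * Q = P

/-- The set `L₃` of maps `S : C(𝔄) → P(𝔄)` such that `S(C)` is a projection in `C` and
`S(C) ≤ S(D)` whenever `D ⊆ C`. -/
def L3 (n : ℕ) :=
  {S : Context n → MatAlg n //
    (∀ C, IsProjIn C (S C)) ∧
    ∀ C D : Context n, D.1 ≤ C.1 → projLE (S C) (S D)}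

/-- The pointwise order on `L₃`. -/
def L3le {n : ℕ} (S₁ S₂ : L3 n) : Prop := ∀ C, projLE (S₁.1 C) (S₂.1 C)

namespace Stmt19Aux

variable {n : ℕ}

@[reducible]
noncomputable def ctxCR (C : Context n) : CommRing C.1 :=
  { (inferInstance : Ring C.1) with
    mul_comm := fun a b => Subtype.ext (C.2 a.1 a.2 b.1 b.2) }

lemma mem_of_le {C D : Context n} (h : D.1 ≤ C.1) {x : MatAlg n} (hx : x ∈ D.1) :
    x ∈ C.1 := h hx

lemma mul_idem (C : Context n) {a b : MatAlg n} (ha : a ∈ C.1) (hb : b ∈ C.1)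
    (ha2 : a * a = a) (hb2 : b * b = b) : (a * b) * (a * b) = a * b := by
  letI := ctxCR C
  have h1' : (⟨a,ha⟩ : C.1) * ⟨a,ha⟩ = ⟨a,ha⟩ := Subtype.ext ha2
  have h2' : (⟨b,hb⟩ : C.1) * ⟨b,hb⟩ = ⟨b,hb⟩ := Subtype.ext hb2
  have h : ((⟨a,ha⟩ : C.1) * ⟨b,hb⟩) * ((⟨a,ha⟩:C.1) * ⟨b,hb⟩) = (⟨a,ha⟩ : C.1) * ⟨b,hb⟩ := by
    linear_combination (⟨b,hb⟩ : C.1)*(⟨b,hb⟩:C.1)*h1' + (⟨a,ha⟩:C.1)*h2'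
  exact congrArg Subtype.val h

lemma sup_idem (C : Context n) {a b : MatAlg n} (ha : a ∈ C.1) (hb : b ∈ C.1)
    (ha2 : a * a = a) (hb2 : b * b = b) :
    (a + b - a * b) * (a + b - a * b) = a + b - a * b := by
  letI := ctxCR C
  have h1' : (⟨a,ha⟩ : C.1) * ⟨a,ha⟩ = ⟨a,ha⟩ := Subtype.ext ha2
  have h2' : (⟨b,hb⟩ : C.1) * ⟨b,hb⟩ = ⟨b,hb⟩ := Subtype.ext hb2
  have h : ((⟨a,ha⟩ : C.1) + ⟨b,hb⟩ - ⟨a,ha⟩ * ⟨b,hb⟩) * ((⟨a,ha⟩:C.1) + ⟨b,hb⟩ - ⟨a,ha⟩ * ⟨b,hb⟩)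
      = (⟨a,ha⟩ : C.1) + ⟨b,hb⟩ - ⟨a,ha⟩ * ⟨b,hb⟩ := by
    linear_combination (1-(⟨b,hb⟩:C.1))*(1-(⟨b,hb⟩:C.1))*h1' + (1-(⟨a,ha⟩:C.1))*h2'
  exact congrArg Subtype.val h

lemma inf_mono (C : Context n) {a b c d : MatAlg n} (ha : a ∈ C.1) (hb : b ∈ C.1)
    (hc : c ∈ C.1) (hd : d ∈ C.1) (h1 : a * c = a) (h2 : b * d = b) :
    (a * b) * (c * d) = a * b := by
  letI := ctxCR C
  have h1' : (⟨a,ha⟩ : C.1) * ⟨c,hc⟩ = ⟨a,ha⟩ := Subtype.ext h1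
  have h2' : (⟨b,hb⟩ : C.1) * ⟨d,hd⟩ = ⟨b,hb⟩ := Subtype.ext h2
  have h : ((⟨a,ha⟩ : C.1) * ⟨b,hb⟩) * (⟨c,hc⟩ * ⟨d,hd⟩) = (⟨a,ha⟩ : C.1) * ⟨b,hb⟩ := by
    linear_combination (⟨b,hb⟩ : C.1)*(⟨d,hd⟩:C.1)*h1' + (⟨a,ha⟩:C.1)*h2'
  exact congrArg Subtype.val h

lemma sup_mono (C : Context n) {a b c d : MatAlg n} (ha : a ∈ C.1) (hb : b ∈ C.1)
    (hc : c ∈ C.1) (hd : d ∈ C.1) (h1 : a * c = a) (h2 : b * d = b) :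
    (a + b - a * b) * (c + d - c * d) = a + b - a * b := by
  letI := ctxCR C
  have h1' : (⟨a,ha⟩ : C.1) * ⟨c,hc⟩ = ⟨a,ha⟩ := Subtype.ext h1
  have h2' : (⟨b,hb⟩ : C.1) * ⟨d,hd⟩ = ⟨b,hb⟩ := Subtype.ext h2
  have h : ((⟨a,ha⟩ : C.1) + ⟨b,hb⟩ - ⟨a,ha⟩ * ⟨b,hb⟩) * ((⟨c,hc⟩:C.1) + ⟨d,hd⟩ - ⟨c,hc⟩ * ⟨d,hd⟩)
      = (⟨a,ha⟩ : C.1) + ⟨b,hb⟩ - ⟨a,ha⟩ * ⟨b,hb⟩ := by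
    linear_combination (1-(⟨d,hd⟩:C.1)+(⟨b,hb⟩:C.1)*(⟨d,hd⟩:C.1)-(⟨b,hb⟩:C.1))*h1'
      + (1-(⟨c,hc⟩:C.1))*h2'
  exact congrArg Subtype.val h

lemma le_sup_left (C : Context n) {a b : MatAlg n} (ha : a ∈ C.1) (hb : b ∈ C.1)
    (ha2 : a * a = a) : a * (a + b - a * b) = a := by
  letI := ctxCR C
  have h1' : (⟨a,ha⟩ : C.1) * ⟨a,ha⟩ = ⟨a,ha⟩ := Subtype.ext ha2
  have h : (⟨a,ha⟩ : C.1) * ((⟨a,ha⟩:C.1) + ⟨b,hb⟩ - ⟨a,ha⟩ * ⟨b,hb⟩) = ⟨a,ha⟩ := by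
    linear_combination (1-(⟨b,hb⟩:C.1))*h1'
  exact congrArg Subtype.val h

lemma le_sup_right (C : Context n) {a b : MatAlg n} (ha : a ∈ C.1) (hb : b ∈ C.1)
    (hb2 : b * b = b) : b * (a + b - a * b) = b := by
  letI := ctxCR C
  have h2' : (⟨b,hb⟩ : C.1) * ⟨b,hb⟩ = ⟨b,hb⟩ := Subtype.ext hb2
  have h : (⟨b,hb⟩ : C.1) * ((⟨a,ha⟩:C.1) + ⟨b,hb⟩ - ⟨a,ha⟩ * ⟨b,hb⟩) = ⟨b,hb⟩ := by
    linear_combination (1-(⟨a,ha⟩:C.1))*h2'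
  exact congrArg Subtype.val h

lemma sup_le (C : Context n) {a b t : MatAlg n} (ha : a ∈ C.1) (hb : b ∈ C.1)
    (ht : t ∈ C.1) (h1 : a * t = a) (h2 : b * t = b) :
    (a + b - a * b) * t = a + b - a * b := by
  letI := ctxCR C
  have h1' : (⟨a,ha⟩ : C.1) * ⟨t,ht⟩ = ⟨a,ha⟩ := Subtype.ext h1
  have h2' : (⟨b,hb⟩ : C.1) * ⟨t,ht⟩ = ⟨b,hb⟩ := Subtype.ext h2
  have h : ((⟨a,ha⟩ : C.1) + ⟨b,hb⟩ - ⟨a,ha⟩ * ⟨b,hb⟩) * ⟨t,ht⟩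
      = (⟨a,ha⟩ : C.1) + ⟨b,hb⟩ - ⟨a,ha⟩ * ⟨b,hb⟩ := by
    linear_combination h1' + (1-(⟨a,ha⟩:C.1))*h2'
  exact congrArg Subtype.val h

lemma inf_le_left (C : Context n) {a b : MatAlg n} (ha : a ∈ C.1) (hb : b ∈ C.1)
    (ha2 : a * a = a) : (a * b) * a = a * b := by
  letI := ctxCR C
  have h1' : (⟨a,ha⟩ : C.1) * ⟨a,ha⟩ = ⟨a,ha⟩ := Subtype.ext ha2
  have h : ((⟨a,ha⟩ : C.1) * ⟨b,hb⟩) * ⟨a,ha⟩ = (⟨a,ha⟩:C.1) * ⟨b,hb⟩ := by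
    linear_combination (⟨b,hb⟩:C.1)*h1'
  exact congrArg Subtype.val h

lemma inf_le_right (C : Context n) {a b : MatAlg n} (ha : a ∈ C.1) (hb : b ∈ C.1)
    (hb2 : b * b = b) : (a * b) * b = a * b := by
  letI := ctxCR C
  have h2' : (⟨b,hb⟩ : C.1) * ⟨b,hb⟩ = ⟨b,hb⟩ := Subtype.ext hb2
  have h : ((⟨a,ha⟩ : C.1) * ⟨b,hb⟩) * ⟨b,hb⟩ = (⟨a,ha⟩:C.1) * ⟨b,hb⟩ := by
    linear_combination (⟨a,ha⟩:C.1)*h2'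
  exact congrArg Subtype.val h

lemma le_inf (C : Context n) {a b t : MatAlg n} (ha : a ∈ C.1) (hb : b ∈ C.1)
    (ht : t ∈ C.1) (h1 : t * a = t) (h2 : t * b = t) : t * (a * b) = t := by
  letI := ctxCR C
  have h1' : (⟨t,ht⟩ : C.1) * ⟨a,ha⟩ = ⟨t,ht⟩ := Subtype.ext h1
  have h2' : (⟨t,ht⟩ : C.1) * ⟨b,hb⟩ = ⟨t,ht⟩ := Subtype.ext h2
  have h : (⟨t,ht⟩ : C.1) * ((⟨a,ha⟩:C.1) * ⟨b,hb⟩) = ⟨t,ht⟩ := by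
    linear_combination (⟨b,hb⟩:C.1)*h1' + h2'
  exact congrArg Subtype.val h

lemma adj_forward (C : Context n) {x y a b : MatAlg n} (hx : x ∈ C.1) (hy : y ∈ C.1)
    (ha : a ∈ C.1) (hb : b ∈ C.1) (hxy : x * y = x) (h : (y * a) * b = y * a) :
    x * (1 - a * (1 - b)) = x := by
  letI := ctxCR C
  have h1' : (⟨x,hx⟩ : C.1) * ⟨y,hy⟩ = ⟨x,hx⟩ := Subtype.ext hxy
  have h2' : ((⟨y,hy⟩ : C.1) * ⟨a,ha⟩) * ⟨b,hb⟩ = (⟨y,hy⟩:C.1) * ⟨a,ha⟩ := Subtype.ext h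
  have hh : (⟨x,hx⟩ : C.1) * (1 - (⟨a,ha⟩:C.1) * (1 - ⟨b,hb⟩)) = ⟨x,hx⟩ := by
    linear_combination (⟨x,hx⟩:C.1)*h2' + ((⟨a,ha⟩:C.1)-(⟨a,ha⟩:C.1)*(⟨b,hb⟩:C.1))*h1'
  exact congrArg Subtype.val hh

lemma adj_backward (C : Context n) {x a b : MatAlg n} (hx : x ∈ C.1)
    (ha : a ∈ C.1) (hb : b ∈ C.1) (h : x * (1 - a * (1 - b)) = x) :
    (x * a) * b = x * a := by
  letI := ctxCR C
  have h1' : (⟨x,hx⟩ : C.1) * (1 - (⟨a,ha⟩:C.1) * (1 - ⟨b,hb⟩)) = ⟨x,hx⟩ := Subtype.ext h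
  have hh : ((⟨x,hx⟩ : C.1) * ⟨a,ha⟩) * ⟨b,hb⟩ = (⟨x,hx⟩:C.1) * ⟨a,ha⟩ := by
    linear_combination h1'
  exact congrArg Subtype.val hh

lemma mul_right_comm_absorb (C : Context n) {q g : MatAlg n} (hq : q ∈ C.1) (hg : g ∈ C.1)
    (hq2 : q * q = q) : (q * g) * q = q * g := by
  letI := ctxCR C
  have h1' : (⟨q,hq⟩ : C.1) * ⟨q,hq⟩ = ⟨q,hq⟩ := Subtype.ext hq2
  have h : ((⟨q,hq⟩ : C.1) * ⟨g,hg⟩) * ⟨q,hq⟩ = (⟨q,hq⟩:C.1) * ⟨g,hg⟩ := by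
    linear_combination (⟨g,hg⟩:C.1)*h1'
  exact congrArg Subtype.val h

lemma star_comm_proj (C : Context n) {a b : MatAlg n} (ha : a ∈ C.1) (hb : b ∈ C.1)
    (has : star a = a) (hbs : star b = b) : star (a * b) = a * b := by
  rw [star_mul, has, hbs]; exact C.2 b hb a ha

lemma IsProjIn.mul {C : Context n} {a b : MatAlg n} (hA : IsProjIn C a) (hB : IsProjIn C b) :
    IsProjIn C (a * b) :=
  ⟨mul_mem hA.1 hB.1, star_comm_proj C hA.1 hB.1 hA.2.1 hB.2.1,
    mul_idem C hA.1 hB.1 hA.2.2 hB.2.2⟩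

lemma IsProjIn.one (C : Context n) : IsProjIn C 1 := ⟨one_mem _, star_one _, one_mul _⟩

lemma IsProjIn.zero (C : Context n) : IsProjIn C 0 := ⟨zero_mem _, star_zero _, zero_mul _⟩

lemma IsProjIn.of_le {C D : Context n} (h : D.1 ≤ C.1) {x : MatAlg n} (hx : IsProjIn D x) :
    IsProjIn C x := ⟨h hx.1, hx.2⟩

lemma IsProjIn.compl {C : Context n} {a : MatAlg n} (hA : IsProjIn C a) :
    IsProjIn C (1 - a) := by
  refine ⟨sub_mem (one_mem _) hA.1, by rw [star_sub, star_one, hA.2.1], ?_⟩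
  have : (1 - a) * (1 - a) = 1 - a - a + a * a := by noncomm_ring
  rw [this, hA.2.2]; abel

lemma prodOf_proj (C : Context n) (g : Context n → MatAlg n)
    (hg : ∀ D : Context n, D.1 ≤ C.1 → IsProjIn C (g D)) :
    ∀ l : List (Context n), (∀ D ∈ l, D.1 ≤ C.1) → IsProjIn C ((l.map g).prod)
  | [], _ => by simpa using IsProjIn.one C
  | (D :: l), h => by
      simp only [List.map_cons, List.prod_cons]
      exact IsProjIn.mul (hg D (h D (by simp))) (prodOf_proj C g hg l (fun E hE => h E (by simp [hE])))

lemma prodOf_absorb (g : Context n → MatAlg n) (X : MatAlg n) :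
    ∀ l : List (Context n), (∀ D ∈ l, X * g D = X) → X * (l.map g).prod = X
  | [], _ => by simp
  | (D :: l), h => by
      simp only [List.map_cons, List.prod_cons]
      rw [← mul_assoc, h D (by simp)]
      exact prodOf_absorb g X l (fun E hE => h E (by simp [hE]))

lemma eq_of_mulVec_eq {M N : MatAlg n} (h : ∀ v, M.mulVec v = N.mulVec v) : M = N := by
  ext i j
  have := congrFun (h (Pi.single j 1)) i
  simpa using this

lemma exists_meet (C : Context n) (g : Context n → MatAlg n)
    (hg : ∀ D : Context n, D.1 ≤ C.1 → IsProjIn C (g D)) :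
    ∃ Q : MatAlg n, IsProjIn C Q ∧
      (∀ D : Context n, D.1 ≤ C.1 → Q * g D = Q) ∧
      (∀ X : MatAlg n, (∀ D : Context n, D.1 ≤ C.1 → X * g D = X) → X * Q = X) := by
  classical
  set ranks : Set ℕ :=
    {r | ∃ l : List (Context n), (∀ D ∈ l, D.1 ≤ C.1) ∧ ((l.map g).prod).rank = r} with hranks
  have hne : ranks.Nonempty :=
    ⟨((([] : List (Context n)).map g).prod).rank, [], by simp, rfl⟩
  obtain ⟨l₀, hl₀, hrank⟩ := Nat.sInf_mem hne
  set Q := (l₀.map g).prod with hQdef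
  have hQproj : IsProjIn C Q := prodOf_proj C g hg l₀ hl₀
  refine ⟨Q, hQproj, ?_, fun X hX => prodOf_absorb g X l₀ (fun D hD => hX D (hl₀ D hD))⟩
  intro D hD
  set Q' := Q * g D with hQ'
  have hlist : ∀ E ∈ l₀ ++ [D], E.1 ≤ C.1 := by
    intro E hE
    rcases List.mem_append.mp hE with h | h
    · exact hl₀ E h
    · simp only [List.mem_singleton] at h; subst h; exact hD
  have hQ'eq : ((l₀ ++ [D]).map g).prod = Q' := by
    simp [List.map_append, List.prod_append, hQ', hQdef]
  have hQ'proj : IsProjIn C Q' := hQ'eq ▸ prodOf_proj C g hg _ hlist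
  have hmem : Q'.rank ∈ ranks := ⟨l₀ ++ [D], hlist, by rw [hQ'eq]⟩
  have hle : Q.rank ≤ Q'.rank := by
    have := Nat.sInf_le hmem
    omega
  have hrange_le : LinearMap.range (Matrix.mulVecLin Q') ≤ LinearMap.range (Matrix.mulVecLin Q) := by
    rw [hQ', Matrix.mulVecLin_mul]
    exact LinearMap.range_comp_le_range _ _
  have hrange : LinearMap.range (Matrix.mulVecLin Q') = LinearMap.range (Matrix.mulVecLin Q) :=
    Submodule.eq_of_le_of_finrank_le hrange_le hle
  have key : Q' * Q = Q := by
    apply eq_of_mulVec_eq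
    intro v
    have hv : Q.mulVec v ∈ LinearMap.range (Matrix.mulVecLin Q') := by
      rw [hrange]; exact ⟨v, rfl⟩
    obtain ⟨w, hw⟩ := hv
    have hw' : Q'.mulVec w = Q.mulVec v := hw
    calc (Q' * Q).mulVec v = Q'.mulVec (Q.mulVec v) := (Matrix.mulVec_mulVec _ _ _).symm
      _ = Q'.mulVec (Q'.mulVec w) := by rw [hw']
      _ = (Q' * Q').mulVec w := Matrix.mulVec_mulVec _ _ _
      _ = Q'.mulVec w := by rw [hQ'proj.2.2]
      _ = Q.mulVec v := hw'
  have key2 : Q' * Q = Q' :=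
    mul_right_comm_absorb C hQproj.1 (hg D hD).1 hQproj.2.2
  exact key2.symm.trans key


noncomputable section

def topL : L3 n :=
  ⟨fun _ => 1, fun C => IsProjIn.one C, fun _ _ _ => one_mul 1⟩

def botL : L3 n :=
  ⟨fun _ => 0, fun C => IsProjIn.zero C, fun _ _ _ => zero_mul 0⟩

def infL (S₁ S₂ : L3 n) : L3 n :=
  ⟨fun C => S₁.1 C * S₂.1 C,
    fun C => IsProjIn.mul (S₁.2.1 C) (S₂.2.1 C),
    fun C D h => inf_mono C (S₁.2.1 C).1 (S₂.2.1 C).1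
      (mem_of_le h (S₁.2.1 D).1) (mem_of_le h (S₂.2.1 D).1)
      (S₁.2.2 C D h) (S₂.2.2 C D h)⟩

def supL (S₁ S₂ : L3 n) : L3 n :=
  ⟨fun C => S₁.1 C + S₂.1 C - S₁.1 C * S₂.1 C,
    fun C => by
      obtain ⟨ha, has, ha2⟩ := S₁.2.1 C
      obtain ⟨hb, hbs, hb2⟩ := S₂.2.1 C
      refine ⟨sub_mem (add_mem ha hb) (mul_mem ha hb), ?_, sup_idem C ha hb ha2 hb2⟩
      rw [star_sub, star_add, has, hbs, star_comm_proj C ha hb has hbs],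
    fun C D h => sup_mono C (S₁.2.1 C).1 (S₂.2.1 C).1
      (mem_of_le h (S₁.2.1 D).1) (mem_of_le h (S₂.2.1 D).1)
      (S₁.2.2 C D h) (S₂.2.2 C D h)⟩

/-- the pointwise implication-generator: `g D = 1 - A(D)(1 - B(D))`. -/
def gimp (A B : L3 n) (D : Context n) : MatAlg n := 1 - A.1 D * (1 - B.1 D)

lemma gimp_projIn (A B : L3 n) {C D : Context n} (h : D.1 ≤ C.1) :
    IsProjIn C (gimp A B D) :=
  IsProjIn.compl (IsProjIn.mul (IsProjIn.of_le h (A.2.1 D))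
    (IsProjIn.compl (IsProjIn.of_le h (B.2.1 D))))

def himpVal (A B : L3 n) (C : Context n) : MatAlg n :=
  (exists_meet C (gimp A B) (fun _ h => gimp_projIn A B h)).choose

lemma himpVal_spec (A B : L3 n) (C : Context n) :
    IsProjIn C (himpVal A B C) ∧
      (∀ D : Context n, D.1 ≤ C.1 → himpVal A B C * gimp A B D = himpVal A B C) ∧
      (∀ X : MatAlg n, (∀ D : Context n, D.1 ≤ C.1 → X * gimp A B D = X) →
        X * himpVal A B C = X) :=
  (exists_meet C (gimp A B) (fun _ h => gimp_projIn A B h)).choose_spec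

def himpL (A B : L3 n) : L3 n :=
  ⟨fun C => himpVal A B C,
    fun C => (himpVal_spec A B C).1,
    fun C D h => (himpVal_spec A B D).2.2 (himpVal A B C)
      (fun E hE => (himpVal_spec A B C).2.1 E (le_trans hE h))⟩

lemma L3le_antisymm (S₁ S₂ : L3 n) (h1 : L3le S₁ S₂) (h2 : L3le S₂ S₁) : S₁ = S₂ := by
  refine Subtype.ext (funext fun C => ?_)
  have hc : S₁.1 C * S₂.1 C = S₂.1 C * S₁.1 C := C.2 _ (S₁.2.1 C).1 _ (S₂.2.1 C).1
  rw [← h1 C, hc, h2 C]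

lemma adjunction (X A B : L3 n) : L3le (infL X A) B ↔ L3le X (himpL A B) := by
  constructor
  · intro hXA C
    refine (himpVal_spec A B C).2.2 (X.1 C) (fun D hD => ?_)
    exact adj_forward C (X.2.1 C).1 (mem_of_le hD (X.2.1 D).1)
      (mem_of_le hD (A.2.1 D).1) (mem_of_le hD (B.2.1 D).1)
      (X.2.2 C D hD) (hXA D)
  · intro hX C
    have h1 : X.1 C * himpVal A B C = X.1 C := hX C
    have h2 : himpVal A B C * gimp A B C = himpVal A B C :=
      (himpVal_spec A B C).2.1 C le_rfl
    have h3 : X.1 C * gimp A B C = X.1 C := by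
      rw [← h1, mul_assoc, h2]
    exact adj_backward C (X.2.1 C).1 (A.2.1 C).1 (B.2.1 C).1 h3

/-- the minimal context: scalars. -/
def Cmin : Context n :=
  ⟨⊥, by
    intro a ha b hb
    rcases ha with ⟨x, rfl⟩
    exact Algebra.commutes x b⟩

lemma Cmin_le (C : Context n) : (Cmin : Context n).1 ≤ C.1 := bot_le

lemma proj_Cmin (S : L3 n) : S.1 Cmin = 0 ∨ S.1 Cmin = 1 := by
  obtain ⟨hmem, _, hidem⟩ := S.2.1 Cmin
  rcases hmem with ⟨c, hc⟩
  rcases Nat.eq_zero_or_pos n with hn | hn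
  · left
    subst hn
    exact Subsingleton.elim _ _
  · have hc1 : S.1 Cmin = c • (1 : MatAlg n) := by
      rw [← hc]
      show algebraMap ℂ (MatAlg n) c = c • 1
      exact Algebra.algebraMap_eq_smul_one c
    have hcc : c * c = c := by
      have h0 : ((c * c) • (1 : MatAlg n)) = c • (1 : MatAlg n) := by
        have hmm : (c • (1:MatAlg n)) * (c • (1:MatAlg n)) = (c * c) • (1:MatAlg n) := by
          rw [smul_mul_smul_comm, one_mul]
        rw [← hmm, ← hc1, hidem, hc1]
      have i0 : Fin n := ⟨0, hn⟩
      have := congrFun (congrFun h0 i0) i0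
      simpa [Matrix.one_apply] using this
    have hsq : c ^ 2 = c := by rw [sq]; exact hcc
    rcases eq_zero_or_one_of_sq_eq_self hsq with h | h
    · left; rw [hc1, h, zero_smul]
    · right; rw [hc1, h, one_smul]

lemma eq_bot_of_Cmin_zero (S : L3 n) (h : S.1 Cmin = 0) : S = botL := by
  refine Subtype.ext (funext fun C => ?_)
  have hm := S.2.2 C Cmin (Cmin_le C)
  rw [h] at hm
  have hm2 : S.1 C * 0 = S.1 C := hm
  rw [mul_zero] at hm2
  exact hm2.symm

lemma himp_bot_eq_bot (S : L3 n) (hS : S ≠ botL) : himpL S botL = botL := by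
  have hS1 : S.1 Cmin = 1 := by
    rcases proj_Cmin S with h | h
    · exact absurd (eq_bot_of_Cmin_zero S h) hS
    · exact h
  have hNN : L3le (himpL S botL) (himpL S botL) := fun C => ((himpL S botL).2.1 C).2.2
  have hinf : L3le (infL (himpL S botL) S) botL := (adjunction _ S botL).mpr hNN
  have hzero : ∀ C, (himpL S botL).1 C * S.1 C = 0 := by
    intro C
    have h2 : ((infL (himpL S botL) S).1 C) * (0 : MatAlg n) = (infL (himpL S botL) S).1 C :=
      hinf C
    rw [mul_zero] at h2
    exact h2.symm
  have hNmin : (himpL S botL).1 Cmin = 0 := by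
    have := hzero Cmin
    rwa [hS1, mul_one] at this
  exact eq_bot_of_Cmin_zero _ hNmin

lemma himp_bot_bot : himpL (botL : L3 n) botL = topL := by
  apply L3le_antisymm
  · intro C; exact mul_one _
  · refine (adjunction topL botL botL).mp (fun C => ?_)
    show ((1 : MatAlg n) * 0) * 0 = 1 * 0
    simp

end
end Stmt19Aux

/-- `L₃`, ordered pointwise, is a Heyting algebra: it is a bounded lattice with pointwise
meet (product) and join of projections, top `1`, bottom `0`, and it carries an implication
`himp` satisfying the Heyting adjunction `X ⊓ A ≤ B ↔ X ≤ A ⇨ B`.  Moreover the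
pseudo-complement `¬S := S ⇨ ⊥` satisfies `¬⊥ = ⊤` and `¬S = ⊥` for `S ≠ ⊥`; in particular
the only regular elements (`¬¬S = S`) of `L₃` are `⊥` and `⊤`. -/
theorem stmt_19 (n : ℕ) :
    ∃ (sup inf himp : L3 n → L3 n → L3 n) (top bot : L3 n),
      -- `L3le` is a partial order
      (∀ S : L3 n, L3le S S) ∧
      (∀ S₁ S₂ : L3 n, L3le S₁ S₂ → L3le S₂ S₁ → S₁ = S₂) ∧
      (∀ S₁ S₂ S₃ : L3 n, L3le S₁ S₂ → L3le S₂ S₃ → L3le S₁ S₃) ∧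
      -- bounded lattice structure
      (∀ S : L3 n, L3le S top) ∧
      (∀ S : L3 n, L3le bot S) ∧
      (∀ S₁ S₂ : L3 n, L3le S₁ (sup S₁ S₂)) ∧
      (∀ S₁ S₂ : L3 n, L3le S₂ (sup S₁ S₂)) ∧
      (∀ S₁ S₂ T : L3 n, L3le S₁ T → L3le S₂ T → L3le (sup S₁ S₂) T) ∧
      (∀ S₁ S₂ : L3 n, L3le (inf S₁ S₂) S₁) ∧
      (∀ S₁ S₂ : L3 n, L3le (inf S₁ S₂) S₂) ∧
      (∀ S₁ S₂ T : L3 n, L3le T S₁ → L3le T S₂ → L3le T (inf S₁ S₂)) ∧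
      -- the concrete pointwise formulas for the operations
      (∀ C : Context n, top.1 C = 1) ∧
      (∀ C : Context n, bot.1 C = 0) ∧
      (∀ (S₁ S₂ : L3 n) (C : Context n), (inf S₁ S₂).1 C = S₁.1 C * S₂.1 C) ∧
      (∀ (S₁ S₂ : L3 n) (C : Context n),
        (sup S₁ S₂).1 C = S₁.1 C + S₂.1 C - S₁.1 C * S₂.1 C) ∧
      -- the Heyting adjunction characterizing the implication
      (∀ X A B : L3 n, L3le (inf X A) B ↔ L3le X (himp A B)) ∧
      -- the pseudo-complement `¬S = S ⇨ ⊥`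
      (himp bot bot = top) ∧
      (∀ S : L3 n, S ≠ bot → himp S bot = bot) ∧
      -- the only regular elements are `⊥` and `⊤`
      (∀ S : L3 n, himp (himp S bot) bot = S → S = bot ∨ S = top) := by
  classical
  refine ⟨Stmt19Aux.supL, Stmt19Aux.infL, Stmt19Aux.himpL, Stmt19Aux.topL, Stmt19Aux.botL,
    fun S C => (S.2.1 C).2.2,
    Stmt19Aux.L3le_antisymm,
    fun S₁ S₂ S₃ h12 h23 C => by
      show S₁.1 C * S₃.1 C = S₁.1 C
      rw [← h12 C, mul_assoc, h23 C],
    fun S C => mul_one _,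
    fun S C => zero_mul _,
    fun S₁ S₂ C => Stmt19Aux.le_sup_left C (S₁.2.1 C).1 (S₂.2.1 C).1 (S₁.2.1 C).2.2,
    fun S₁ S₂ C => Stmt19Aux.le_sup_right C (S₁.2.1 C).1 (S₂.2.1 C).1 (S₂.2.1 C).2.2,
    fun S₁ S₂ T h1 h2 C =>
      Stmt19Aux.sup_le C (S₁.2.1 C).1 (S₂.2.1 C).1 (T.2.1 C).1 (h1 C) (h2 C),
    fun S₁ S₂ C => Stmt19Aux.inf_le_left C (S₁.2.1 C).1 (S₂.2.1 C).1 (S₁.2.1 C).2.2,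
    fun S₁ S₂ C => Stmt19Aux.inf_le_right C (S₁.2.1 C).1 (S₂.2.1 C).1 (S₂.2.1 C).2.2,
    fun S₁ S₂ T h1 h2 C =>
      Stmt19Aux.le_inf C (S₁.2.1 C).1 (S₂.2.1 C).1 (T.2.1 C).1 (h1 C) (h2 C),
    fun C => rfl,
    fun C => rfl,
    fun S₁ S₂ C => rfl,
    fun S₁ S₂ C => rfl,
    Stmt19Aux.adjunction,
    Stmt19Aux.himp_bot_bot,
    Stmt19Aux.himp_bot_eq_bot,
    fun S h => ?_⟩
  by_cases hS : S = Stmt19Aux.botL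
  · exact Or.inl hS
  · right
    rw [Stmt19Aux.himp_bot_eq_bot S hS, Stmt19Aux.himp_bot_bot] at h
    exact h.symm
end
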